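/- arXiv:math/9604208 — 4 statements merged into one kernel-verified Lean document; each statement's English description precedes it below -/
import Mathlib

section
/- Let Z be a finite nonempty set and W = Zᴺ with the product topology (Z discrete). A subset D ⊆ W is a Gδ set if and only if there exists a set H of finite sequences over Z such that D = { w ∈ W : w has infinitely many initial segments belonging to H }. -/
abbrev Play (Z : Type) : Type := ℕ → Z

open Set PiNat

namespace Stmt4Aux

variable {Z : Type} [TopologicalSpace Z] [DiscreteTopology Z]

/-- The prefix of length `m` of a play. -/
def pf (w : Play Z) (m : ℕ) : List Z := List.ofFn fun i : Fin m => w i.1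

lemma pf_length (w : Play Z) (m : ℕ) : (pf w m).length = m := by simp [pf]

lemma pf_take (w : Play Z) {j m : ℕ} (h : j ≤ m) : (pf w m).take j = pf w j := by
  apply List.ext_getElem
  · simp [pf, h]
  · intro i h1 h2
    simp [pf]

lemma pf_eq_iff {w x : Play Z} {m : ℕ} : pf w m = pf x m ↔ ∀ i < m, w i = x i := by
  rw [pf, pf, List.ofFn_inj, funext_iff]
  constructor
  · intro h i hi; exact h ⟨i, hi⟩
  · intro h i; exact h i.1 i.2

/-- The cylinder determined by a finite sequence. -/
def mycyl (s : List Z) : Set (Play Z) := {w | pf w s.length = s}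

lemma mycyl_pf_eq_cylinder (w : Play Z) (m : ℕ) :
    mycyl (pf w m) = cylinder (E := fun _ : ℕ => Z) w m := by
  ext y
  rw [mycyl, mem_setOf_eq, pf_length, mem_cylinder_iff]
  exact pf_eq_iff

lemma self_mem_mycyl (w : Play Z) (m : ℕ) : w ∈ mycyl (pf w m) := by
  rw [mycyl_pf_eq_cylinder]; exact self_mem_cylinder w m

lemma mycyl_pf_anti (w : Play Z) {m m' : ℕ} (h : m ≤ m') :
    mycyl (pf w m') ⊆ mycyl (pf w m) := by
  rw [mycyl_pf_eq_cylinder, mycyl_pf_eq_cylinder]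
  exact cylinder_anti w h

lemma isOpen_pfmem (H : Set (List Z)) (m : ℕ) : IsOpen {w : Play Z | pf w m ∈ H} := by
  rw [isOpen_iff_forall_mem_open]
  intro w hw
  refine ⟨mycyl (pf w m), ?_, ?_, self_mem_mycyl w m⟩
  · intro y hy
    rw [mycyl, mem_setOf_eq, pf_length] at hy
    simpa [hy] using hw
  · rw [mycyl_pf_eq_cylinder]; exact isOpen_cylinder (E := fun _ : ℕ => Z) w m

lemma exists_mycyl_subset {U : Set (Play Z)} (hU : IsOpen U) {w : Play Z} (hw : w ∈ U) :
    ∃ m, mycyl (pf w m) ⊆ U := by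
  obtain ⟨t, ⟨x, n, rfl⟩, hwx, hsub⟩ :=
    (isTopologicalBasis_cylinders (fun _ : ℕ => Z)).exists_subset_of_mem_open hw hU
  refine ⟨n, ?_⟩
  rw [mycyl_pf_eq_cylinder, (mem_cylinder_iff_eq).1 hwx]
  exact hsub

open Classical in
/-- The recursive "counting" predicate: `s ∈ H` iff the cylinder of `s` is contained
in `V c` where `c` is the number of proper initial segments of `s` already in `H`. -/
noncomputable def hfun (V : ℕ → Set (Play Z)) (s : List Z) : Bool :=
  decide (mycyl s ⊆ V (((List.range s.length).attach.filter
      (fun j => hfun V (s.take j.1))).length))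
termination_by s.length
decreasing_by
  all_goals
    have hj := List.mem_range.1 j.2
    simp only [List.length_take]
    omega

open Classical in
noncomputable def cnt (V : ℕ → Set (Play Z)) (s : List Z) : ℕ :=
  ((List.range s.length).attach.filter (fun j => hfun V (s.take j.1))).length

open Classical in
lemma hfun_iff (V : ℕ → Set (Play Z)) (s : List Z) :
    hfun V s = true ↔ mycyl s ⊆ V (cnt V s) := by
  rw [hfun, decide_eq_true_iff, cnt]

lemma length_filter_attach {α : Type*} (l : List α) (p : α → Bool) :
    (l.attach.filter (fun j => p j.1)).length = (l.filter p).length := by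
  rw [List.filter_attach l p]
  simp

variable (V : ℕ → Set (Play Z))

lemma cnt_pf_eq (w : Play Z) (m : ℕ) :
    cnt V (pf w m) = ((List.range m).filter (fun j => hfun V (pf w j))).length := by
  rw [cnt, pf_length, length_filter_attach (List.range m) (fun j => hfun V ((pf w m).take j))]
  congr 1
  apply List.filter_congr
  intro j hj
  rw [pf_take w (le_of_lt (List.mem_range.1 hj))]

lemma cnt_pf_succ (w : Play Z) (m : ℕ) :
    cnt V (pf w (m + 1)) = cnt V (pf w m) + (if hfun V (pf w m) then 1 else 0) := by
  rw [cnt_pf_eq, cnt_pf_eq, List.range_succ, List.filter_append, List.length_append]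
  congr 1
  rw [List.filter_singleton]
  cases h : hfun V (pf w m) <;> simp [h]

lemma cnt_pf_mono (w : Play Z) {m m' : ℕ} (h : m ≤ m') :
    cnt V (pf w m) ≤ cnt V (pf w m') := by
  induction m' with
  | zero => simpa [Nat.le_zero.1 h] using le_refl _
  | succ k ih =>
    rcases Nat.lt_or_ge m (k + 1) with h' | h'
    · calc cnt V (pf w m) ≤ cnt V (pf w k) := ih (Nat.lt_succ_iff.1 h')
        _ ≤ _ := by rw [cnt_pf_succ]; omega
    · have : m = k + 1 := le_antisymm h h'
      simp [this]

lemma mem_iInter_iff_infinite (hV : ∀ n, IsOpen (V n))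
    (hanti : ∀ {m n : ℕ}, m ≤ n → V n ⊆ V m) (w : Play Z) :
    (∀ n, w ∈ V n) ↔ {m | hfun V (pf w m) = true}.Infinite := by
  constructor
  · intro hw
    by_contra hfin
    rw [Set.not_infinite] at hfin
    obtain ⟨b, hb⟩ := hfin.bddAbove
    have hfalse : ∀ m, b + 1 ≤ m → hfun V (pf w m) = false := by
      intro m hm
      by_contra h
      rw [Bool.not_eq_false] at h
      have : m ≤ b := hb h
      omega
    have hstab : ∀ m, b + 1 ≤ m → cnt V (pf w m) = cnt V (pf w (b + 1)) := by
      intro m hm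
      induction m, hm using Nat.le_induction with
      | base => rfl
      | succ k hk ih => rw [cnt_pf_succ, hfalse k hk, ih]; simp
    obtain ⟨k, hk⟩ := exists_mycyl_subset (hV _) (hw (cnt V (pf w (b + 1))))
    have h1 : mycyl (pf w (max (b + 1) k)) ⊆ V (cnt V (pf w (max (b + 1) k))) := by
      rw [hstab _ (le_max_left _ _)]
      exact (mycyl_pf_anti w (le_max_right _ _)).trans hk
    have h2 : hfun V (pf w (max (b + 1) k)) = true := (hfun_iff V _).2 h1
    have h3 := hfalse _ (le_max_left (b + 1) k)
    rw [h2] at h3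
    simp at h3
  · intro hinf n
    -- there is m with hfun true and cnt ≥ n
    have key : ∀ n : ℕ, ∃ m, hfun V (pf w m) = true ∧ n ≤ cnt V (pf w m) := by
      intro n
      induction n with
      | zero =>
        obtain ⟨m, hm⟩ := hinf.nonempty
        exact ⟨m, hm, Nat.zero_le _⟩
      | succ k ih =>
        obtain ⟨m, hm, hc⟩ := ih
        obtain ⟨m', hm', hlt⟩ := hinf.exists_gt m
        refine ⟨m', hm', ?_⟩
        calc k + 1 ≤ cnt V (pf w (m + 1)) := by rw [cnt_pf_succ]; simp [hm]; omega
          _ ≤ cnt V (pf w m') := cnt_pf_mono V w hlt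
    obtain ⟨m, hm, hc⟩ := key n
    have := (hfun_iff V (pf w m)).1 hm (self_mem_mycyl w m)
    exact hanti hc this

end Stmt4Aux

open Stmt4Aux Set in
/-- A subset of Zᴺ is Gδ iff it is the set of sequences having infinitely many
initial segments in some set H of finite sequences. -/
theorem stmt_4 {Z : Type} [Fintype Z] [Nonempty Z]
    [TopologicalSpace Z] [DiscreteTopology Z] (D : Set (Play Z)) :
    IsGδ D ↔ ∃ H : Set (List Z),
      D = {w | {m : ℕ | (List.ofFn fun i : Fin m => w i.1) ∈ H}.Infinite} := by
  constructor
  · intro hD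
    obtain ⟨U, hUopen, rfl⟩ := hD.eq_iInter_nat
    set V : ℕ → Set (Play Z) := fun n => ⋂ k ∈ Finset.range (n + 1), U k with hVdef
    have hVopen : ∀ n, IsOpen (V n) := fun n =>
      isOpen_biInter_finset fun k _ => hUopen k
    have hanti : ∀ {m n : ℕ}, m ≤ n → V n ⊆ V m := by
      intro m n hmn w hw
      simp only [hVdef, mem_iInter, Finset.mem_range] at *
      intro k hk
      exact hw k (by omega)
    have hUV : ⋂ n, U n = ⋂ n, V n := by
      ext w
      simp only [hVdef, mem_iInter, Finset.mem_range]
      constructor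
      · intro h n k _; exact h k
      · intro h n; exact h n n (by omega)
    refine ⟨{s | hfun V s = true}, ?_⟩
    rw [hUV]
    ext w
    rw [mem_iInter]
    exact mem_iInter_iff_infinite V hVopen hanti w
  · rintro ⟨H, rfl⟩
    have heq : {w : Play Z | {m : ℕ | (List.ofFn fun i : Fin m => w i.1) ∈ H}.Infinite}
        = ⋂ n, ⋃ m, ⋃ (_ : n < m), {w : Play Z | pf w m ∈ H} := by
      ext w
      simp only [mem_setOf_eq, mem_iInter, mem_iUnion]
      rw [Set.infinite_iff_exists_gt]
      constructor
      · intro h n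
        obtain ⟨m, hm, hlt⟩ := h n
        exact ⟨m, hlt, hm⟩
      · intro h n
        obtain ⟨m, hlt, hm⟩ := h n
        exact ⟨m, hm, hlt⟩
    rw [heq]
    exact IsGδ.iInter_of_isOpen fun n =>
      isOpen_iUnion fun m => isOpen_iUnion fun _ => isOpen_pfmem H m
end

section
/- Let f : X × Y → ℝ be a function on the product of two finite nonempty sets. Then the one-round game with payoff f is determined with both players having optimal mixed strategies: there exist probability distributions x* on X and y* on Y such that min_{y∈Y} Σ_{i∈X} x*(i) f(i,y) = max_{x∈X} Σ_{j∈Y} y*(j) f(x,j), and this common value equals sup over distributions x of inf over distributions y of the bilinear expectation Σᵢⱼ x(i)y(j)f(i,j), which equals the corresponding inf-sup. -/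
open Finset Set Pointwise

lemma vn_alternative {X Y : Type} [Fintype X] [Nonempty X] [Fintype Y] [Nonempty Y]
    (A : X → Y → ℝ) :
    (∃ x ∈ stdSimplex ℝ X, ∀ j, 0 < ∑ i, x i * A i j) ∨
    (∃ y ∈ stdSimplex ℝ Y, ∀ i, ∑ j, y j * A i j ≤ 0) := by
  classical
  set T : (Y → ℝ) →ₗ[ℝ] (X → ℝ) :=
    { toFun := fun y i => ∑ j, y j * A i j
      map_add' := by
        intro y z; funext i
        simp [add_mul, Finset.sum_add_distrib]
      map_smul' := by
        intro c y; funext i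
        simp [Finset.mul_sum, mul_assoc] } with hT
  have Tcont : Continuous T := by
    apply continuous_pi
    intro i
    exact continuous_finset_sum _ fun j _ => (continuous_apply j).mul continuous_const
  set K : Set (X → ℝ) := T '' stdSimplex ℝ Y with hK
  set P : Set (X → ℝ) := Set.univ.pi fun _ : X => Set.Ici (0:ℝ) with hP
  set C : Set (X → ℝ) := K + P with hC
  by_cases h0 : (0 : X → ℝ) ∈ C
  · right
    obtain ⟨k, hk, s, hs, hks⟩ := Set.mem_add.1 h0
    obtain ⟨y, hy, rfl⟩ := hk
    refine ⟨y, hy, fun i => ?_⟩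
    have h1 : T y i + s i = 0 := congrFun hks i
    have h2 : 0 ≤ s i := hs i (Set.mem_univ i)
    have : T y i = ∑ j, y j * A i j := rfl
    linarith [this ▸ h1]
  · left
    have hKconv : Convex ℝ K := (convex_stdSimplex ℝ Y).linear_image T
    have hPconv : Convex ℝ P := convex_pi fun _ _ => convex_Ici 0
    have hCconv : Convex ℝ C := hKconv.add hPconv
    have hKcomp : IsCompact K := (isCompact_stdSimplex ℝ Y).image Tcont
    have hPcl : IsClosed P := isClosed_set_pi fun _ _ => isClosed_Ici
    have hCcl : IsClosed C := hPcl.add_left_of_isCompact hKcomp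
    obtain ⟨φ, u, hφC, hφ0⟩ := geometric_hahn_banach_closed_point hCconv hCcl h0
    rw [map_zero] at hφ0
    -- ψ := -φ is > -u > 0 on C
    set c : X → ℝ := fun i => -φ (Pi.single i 1) with hc
    have hrepr : ∀ z : X → ℝ, -φ z = ∑ i, z i * c i := by
      intro z
      have hz : z = ∑ i, z i • (Pi.single i 1 : X → ℝ) := by
        funext i
        simp [Pi.single_apply, Finset.sum_apply, mul_ite]
      calc -φ z = -φ (∑ i, z i • (Pi.single i 1 : X → ℝ)) := by rw [← hz]
        _ = ∑ i, z i * c i := by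
            rw [map_sum]
            simp [hc, Finset.sum_neg_distrib, mul_neg]
    -- a base point in K
    obtain ⟨j₀⟩ := ‹Nonempty Y›
    have hk0 : T (Pi.single j₀ 1) ∈ K := ⟨_, single_mem_stdSimplex ℝ j₀, rfl⟩
    have hmemC : ∀ k ∈ K, ∀ s ∈ P, k + s ∈ C := fun k hk s hs => Set.add_mem_add hk hs
    have hpos : ∀ z ∈ C, -u < -φ z := fun z hz => by linarith [hφC z hz]
    have hu : 0 < -u := by linarith
    have hcnn : ∀ i, 0 ≤ c i := by
      intro i
      by_contra hneg
      push_neg at hneg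
      set k0 := T (Pi.single j₀ 1)
      set t : ℝ := (-u - (-φ k0)) / c i with ht
      have hk0C : k0 ∈ C := by
        simpa using hmemC k0 hk0 0 (fun _ _ => Set.self_mem_Ici)
      have htnn : 0 ≤ t := by
        apply div_nonneg_of_nonpos (by linarith [hpos k0 hk0C]) hneg.le
      have hmem : k0 + t • (Pi.single i 1 : X → ℝ) ∈ C := by
        apply hmemC k0 hk0
        intro i' _
        have : (0:ℝ) ≤ (t • (Pi.single i 1 : X → ℝ)) i' := by
          simp only [Pi.smul_apply, smul_eq_mul, Pi.single_apply]
          positivity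
        simpa using this
      have h1 : -u < -φ (k0 + t • (Pi.single i 1 : X → ℝ)) := hpos _ hmem
      have h2 : -φ (k0 + t • (Pi.single i 1 : X → ℝ)) = -φ k0 + t * c i := by
        rw [map_add, map_smul]; simp [hc, smul_eq_mul]; ring
      have h3 : t * c i = -u - (-φ k0) := by
        rw [ht, div_mul_cancel₀ _ (ne_of_lt hneg)]
      rw [h2, h3] at h1
      linarith
    have hKC : K ⊆ C := by
      intro k hk
      simpa using hmemC k hk 0 (fun _ _ => Set.self_mem_Ici)
    have hSpos : 0 < ∑ i, c i := by
      refine Finset.sum_pos' (fun i _ => hcnn i) ?_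
      by_contra hno
      push_neg at hno
      have hzero : ∀ i, c i = 0 := fun i => le_antisymm (hno i (Finset.mem_univ i)) (hcnn i)
      have h := hpos _ (hKC hk0)
      rw [hrepr] at h
      simp [hzero] at h
      linarith
    set S := ∑ i, c i with hS
    refine ⟨fun i => c i / S, ⟨fun i => div_nonneg (hcnn i) hSpos.le, ?_⟩, ?_⟩
    · rw [← Finset.sum_div, div_self hSpos.ne']
    · intro j
      have hcol : T (Pi.single j 1) ∈ C := hKC ⟨_, single_mem_stdSimplex ℝ j, rfl⟩
      have h1 : 0 < -φ (T (Pi.single j 1)) := lt_trans hu (hpos _ hcol)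
      rw [hrepr] at h1
      have hTj : ∀ i, T (Pi.single j 1) i = A i j := by
        intro i
        simp [hT, Pi.single_apply, ite_mul]
      have h2 : 0 < ∑ i, A i j * c i := by
        calc (0:ℝ) < ∑ i, T (Pi.single j 1) i * c i := h1
          _ = ∑ i, A i j * c i := Finset.sum_congr rfl fun i _ => by rw [hTj i]
      have : ∑ i, c i / S * A i j = (∑ i, A i j * c i) / S := by
        rw [Finset.sum_div]
        congr 1; funext i; ring
      rw [this]
      positivity

/-- Mixed strategies (probability distributions) on a finite set. -/
def MixedStrat (X : Type) [Fintype X] : Type :=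
  {x : X → ℝ // (∀ i, 0 ≤ x i) ∧ ∑ i, x i = 1}

set_option maxHeartbeats 1000000 in
/-- Von Neumann's Minimax Theorem for finite two-person zero-sum games. -/
theorem stmt_10 {X Y : Type} [Fintype X] [Nonempty X] [Fintype Y] [Nonempty Y]
    (f : X × Y → ℝ) :
    ∃ (xs : MixedStrat X) (ys : MixedStrat Y) (v : ℝ),
      (⨅ j : Y, ∑ i, xs.1 i * f (i, j)) = v ∧
      (⨆ i : X, ∑ j, ys.1 j * f (i, j)) = v ∧
      (⨆ x : MixedStrat X, ⨅ y : MixedStrat Y,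
        ∑ i, ∑ j, x.1 i * y.1 j * f (i, j)) = v ∧
      (⨅ y : MixedStrat Y, ⨆ x : MixedStrat X,
        ∑ i, ∑ j, x.1 i * y.1 j * f (i, j)) = v := by
  classical
  obtain ⟨i₀⟩ := ‹Nonempty X›
  obtain ⟨j₀⟩ := ‹Nonempty Y›
  haveI : Nonempty (MixedStrat X) := ⟨⟨Pi.single i₀ 1, single_mem_stdSimplex ℝ i₀⟩⟩
  haveI : Nonempty (MixedStrat Y) := ⟨⟨Pi.single j₀ 1, single_mem_stdSimplex ℝ j₀⟩⟩
  set pay : (X → ℝ) → Y → ℝ := fun x j => ∑ i, x i * f (i, j) with hpay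
  set pay' : (Y → ℝ) → X → ℝ := fun y i => ∑ j, y j * f (i, j) with hpay'
  have hYne : (Finset.univ : Finset Y).Nonempty := Finset.univ_nonempty
  have hXne : (Finset.univ : Finset X).Nonempty := Finset.univ_nonempty
  set g : (X → ℝ) → ℝ := fun x => Finset.univ.inf' hYne (pay x) with hg
  set h : (Y → ℝ) → ℝ := fun y => Finset.univ.sup' hXne (pay' y) with hh
  have gcont : Continuous g := by
    apply Continuous.finset_inf'_apply hYne
    intro j _
    exact continuous_finset_sum _ fun i _ => (continuous_apply i).mul continuous_const
  have hcont : Continuous h := by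
    apply Continuous.finset_sup'_apply hXne
    intro i _
    exact continuous_finset_sum _ fun j _ => (continuous_apply j).mul continuous_const
  obtain ⟨xs, hxsmem, hxsmax⟩ := (isCompact_stdSimplex ℝ X).exists_isMaxOn
    ⟨Pi.single i₀ 1, single_mem_stdSimplex ℝ i₀⟩ gcont.continuousOn
  obtain ⟨ys, hysmem, hysmin⟩ := (isCompact_stdSimplex ℝ Y).exists_isMinOn
    ⟨Pi.single j₀ 1, single_mem_stdSimplex ℝ j₀⟩ hcont.continuousOn
  set v1 : ℝ := g xs with hv1
  set v2 : ℝ := h ys with hv2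
  -- combination inequalities
  have combo1 : ∀ x ∈ stdSimplex ℝ X, ∀ y ∈ stdSimplex ℝ Y, g x ≤ ∑ j, y j * pay x j := by
    intro x _ y hy
    calc g x = (∑ j, y j) * g x := by rw [hy.2, one_mul]
      _ = ∑ j, y j * g x := by rw [Finset.sum_mul]
      _ ≤ ∑ j, y j * pay x j := Finset.sum_le_sum fun j _ =>
          mul_le_mul_of_nonneg_left (Finset.inf'_le _ (Finset.mem_univ j)) (hy.1 j)
  have combo2 : ∀ x ∈ stdSimplex ℝ X, ∀ y ∈ stdSimplex ℝ Y, ∑ i, x i * pay' y i ≤ h y := by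
    intro x hx y _
    calc ∑ i, x i * pay' y i ≤ ∑ i, x i * h y := Finset.sum_le_sum fun i _ =>
          mul_le_mul_of_nonneg_left (Finset.le_sup' _ (Finset.mem_univ i)) (hx.1 i)
      _ = (∑ i, x i) * h y := by rw [Finset.sum_mul]
      _ = h y := by rw [hx.2, one_mul]
  have swap : ∀ x y : _, ∑ j, y j * pay x j = ∑ i, x i * pay' y i := by
    intro x y
    simp only [hpay, hpay', Finset.mul_sum]
    rw [Finset.sum_comm]
    exact Finset.sum_congr rfl fun i _ => Finset.sum_congr rfl fun j _ => by ring
  have hv12 : v1 ≤ v2 := by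
    calc v1 ≤ ∑ j, ys j * pay xs j := combo1 xs hxsmem ys hysmem
      _ = ∑ i, xs i * pay' ys i := swap xs ys
      _ ≤ v2 := combo2 xs hxsmem ys hysmem
  have hv21 : v2 ≤ v1 := by
    by_contra hlt
    push_neg at hlt
    set c : ℝ := (v1 + v2) / 2 with hcdef
    have hc1 : v1 < c := by rw [hcdef]; linarith
    have hc2 : c < v2 := by rw [hcdef]; linarith
    rcases vn_alternative (fun i j => f (i, j) - c) with ⟨x, hx, hxall⟩ | ⟨y, hy, hyall⟩
    · have hgt : ∀ j, c < pay x j := by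
        intro j
        have h1 := hxall j
        have h2 : ∑ i, x i * (f (i, j) - c) = pay x j - c := by
          simp only [hpay, mul_sub, Finset.sum_sub_distrib, ← Finset.sum_mul, hx.2, one_mul]
        rw [h2] at h1
        linarith
      have : c < g x := (Finset.lt_inf'_iff hYne).2 fun j _ => hgt j
      have : g x ≤ v1 := hxsmax hx
      linarith
    · have hle : h y ≤ c := Finset.sup'_le hXne _ fun i _ => by
        have h1 := hyall i
        have h2 : ∑ j, y j * (f (i, j) - c) = pay' y i - c := by
          simp only [hpay', mul_sub, Finset.sum_sub_distrib, ← Finset.sum_mul, hy.2, one_mul]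
        rw [h2] at h1
        linarith
      have : v2 ≤ h y := hysmin hy
      linarith
  have hveq : v1 = v2 := le_antisymm hv12 hv21
  refine ⟨⟨xs, hxsmem⟩, ⟨ys, hysmem⟩, v1, ?_, ?_, ?_, ?_⟩
  · -- goal 1
    show (⨅ j : Y, pay xs j) = v1
    obtain ⟨jm, -, hjm⟩ := Finset.exists_mem_eq_inf' hYne (pay xs)
    apply le_antisymm
    · calc (⨅ j : Y, pay xs j) ≤ pay xs jm :=
            ciInf_le (Set.Finite.bddBelow (Set.finite_range _)) jm
        _ = v1 := hjm.symm
    · exact le_ciInf fun j => Finset.inf'_le _ (Finset.mem_univ j)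
  · -- goal 2
    show (⨆ i : X, pay' ys i) = v1
    rw [hveq]
    obtain ⟨im, -, him⟩ := Finset.exists_mem_eq_sup' hXne (pay' ys)
    apply le_antisymm
    · exact ciSup_le fun i => Finset.le_sup' _ (Finset.mem_univ i)
    · calc v2 = pay' ys im := him
        _ ≤ ⨆ i : X, pay' ys i := le_ciSup (Set.Finite.bddAbove (Set.finite_range _)) im
  · -- goal 3
    have inner : ∀ x : MixedStrat X,
        (⨅ y : MixedStrat Y, ∑ i, ∑ j, x.1 i * y.1 j * f (i, j)) = g x.1 := by
      intro x
      have rewr : ∀ y : MixedStrat Y,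
          ∑ i, ∑ j, x.1 i * y.1 j * f (i, j) = ∑ j, y.1 j * pay x.1 j := by
        intro y
        rw [Finset.sum_comm]
        simp only [hpay, Finset.mul_sum]
        exact Finset.sum_congr rfl fun j _ => Finset.sum_congr rfl fun i _ => by ring
      have lb : ∀ y : MixedStrat Y, g x.1 ≤ ∑ i, ∑ j, x.1 i * y.1 j * f (i, j) := by
        intro y
        rw [rewr y]
        exact combo1 x.1 x.2 y.1 y.2
      apply le_antisymm
      · obtain ⟨jm, -, hjm⟩ := Finset.exists_mem_eq_inf' hYne (pay x.1)
        calc (⨅ y : MixedStrat Y, ∑ i, ∑ j, x.1 i * y.1 j * f (i, j))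
            ≤ ∑ i, ∑ j, x.1 i * (⟨Pi.single jm 1, single_mem_stdSimplex ℝ jm⟩ : MixedStrat Y).1 j * f (i, j) :=
              ciInf_le ⟨g x.1, Set.forall_mem_range.2 lb⟩ _
          _ = ∑ j, (⟨Pi.single jm 1, single_mem_stdSimplex ℝ jm⟩ : MixedStrat Y).1 j * pay x.1 j := rewr _
          _ = pay x.1 jm := by
              have e : ∑ j, (⟨Pi.single jm 1, single_mem_stdSimplex ℝ jm⟩ : MixedStrat Y).1 j * pay x.1 j
                  = ∑ j, (Pi.single jm 1 : Y → ℝ) j * pay x.1 j := rfl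
              rw [e]
              simp [Pi.single_apply, ite_mul]
          _ = g x.1 := hjm.symm
      · exact le_ciInf lb
    calc (⨆ x : MixedStrat X, ⨅ y : MixedStrat Y, ∑ i, ∑ j, x.1 i * y.1 j * f (i, j))
        = ⨆ x : MixedStrat X, g x.1 := iSup_congr inner
      _ = v1 := by
          apply le_antisymm
          · exact ciSup_le fun x => hxsmax x.2
          · exact le_ciSup (f := fun x : MixedStrat X => g x.1)
              ⟨v1, Set.forall_mem_range.2 fun x => hxsmax x.2⟩ ⟨xs, hxsmem⟩
  · -- goal 4
    have inner : ∀ y : MixedStrat Y,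
        (⨆ x : MixedStrat X, ∑ i, ∑ j, x.1 i * y.1 j * f (i, j)) = h y.1 := by
      intro y
      have rewr : ∀ x : MixedStrat X,
          ∑ i, ∑ j, x.1 i * y.1 j * f (i, j) = ∑ i, x.1 i * pay' y.1 i := by
        intro x
        simp only [hpay', Finset.mul_sum]
        exact Finset.sum_congr rfl fun i _ => Finset.sum_congr rfl fun j _ => by ring
      have ub : ∀ x : MixedStrat X, ∑ i, ∑ j, x.1 i * y.1 j * f (i, j) ≤ h y.1 := by
        intro x
        rw [rewr x]
        exact combo2 x.1 x.2 y.1 y.2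
      apply le_antisymm
      · exact ciSup_le ub
      · obtain ⟨im, -, him⟩ := Finset.exists_mem_eq_sup' hXne (pay' y.1)
        calc h y.1 = pay' y.1 im := him
          _ = ∑ i, ∑ j, (⟨Pi.single im 1, single_mem_stdSimplex ℝ im⟩ : MixedStrat X).1 i * y.1 j * f (i, j) := by
              rw [rewr ⟨Pi.single im 1, single_mem_stdSimplex ℝ im⟩]
              have e : ∑ i, (⟨Pi.single im 1, single_mem_stdSimplex ℝ im⟩ : MixedStrat X).1 i * pay' y.1 i
                  = ∑ i, (Pi.single im 1 : X → ℝ) i * pay' y.1 i := rfl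
              rw [e]
              simp [Pi.single_apply, ite_mul]
          _ ≤ ⨆ x : MixedStrat X, ∑ i, ∑ j, x.1 i * y.1 j * f (i, j) := by
              have bdd : BddAbove (Set.range fun x : MixedStrat X =>
                  ∑ i, ∑ j, x.1 i * y.1 j * f (i, j)) :=
                ⟨h y.1, Set.forall_mem_range.2 ub⟩
              exact le_ciSup bdd ⟨Pi.single im 1, single_mem_stdSimplex ℝ im⟩
    calc (⨅ y : MixedStrat Y, ⨆ x : MixedStrat X, ∑ i, ∑ j, x.1 i * y.1 j * f (i, j))
        = ⨅ y : MixedStrat Y, h y.1 := iInf_congr inner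
      _ = v1 := by
          rw [hveq]
          apply le_antisymm
          · have bdd : BddBelow (Set.range fun y : MixedStrat Y => h y.1) :=
              ⟨v2, Set.forall_mem_range.2 fun y => hysmin y.2⟩
            exact ciInf_le bdd ⟨ys, hysmem⟩
          · exact le_ciInf fun y => hysmin y.2
end

section
/- Let O ⊆ W be an open set, where W = (X×Y)ᴺ with the product topology for finite nonempty X, Y. Then the Blackwell game Γ(O) with payoff the indicator function of O is determined: sup_σ inf_τ μ_{σ,τ}(O) = inf_τ sup_σ μ_{σ,τ}(O). -/
open MeasureTheory Filter

abbrev Strategy (Z M : Type) : Type := List Z → PMF M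

noncomputable def cylProb {X Y : Type} (σ : Strategy (X × Y) X)
    (τ : Strategy (X × Y) Y) (p : List (X × Y)) : ENNReal :=
  ∏ i : Fin p.length,
    σ (p.take i.1) (p.get i).1 * τ (p.take i.1) (p.get i).2

def cyl {Z : Type} (p : List Z) : Set (Play Z) :=
  {w | ∀ i : Fin p.length, w i.1 = p.get i}

def IsInduced {X Y : Type} [MeasurableSpace X] [MeasurableSpace Y]
    (σ : Strategy (X × Y) X) (τ : Strategy (X × Y) Y)
    (μ : Measure (Play (X × Y))) : Prop :=
  IsProbabilityMeasure μ ∧ ∀ p : List (X × Y), μ (cyl p) = cylProb σ τ p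

open Finset

section Minimax
variable {X Y : Type} [Fintype X] [Nonempty X] [Fintype Y] [Nonempty Y]

theorem bw_minimax_exists (A : X → Y → ℝ) :
    ∃ (v : ℝ) (ρ : X → ℝ) (q : Y → ℝ), ρ ∈ stdSimplex ℝ X ∧ q ∈ stdSimplex ℝ Y ∧
      (∀ y, v ≤ ∑ x, ρ x * A x y) ∧ (∀ x, ∑ y, q y * A x y ≤ v) := by
  classical
  set Φ : (Y → ℝ) → X → ℝ := fun q x => ∑ y, q y * A x y with hΦ
  have hΦcont : ∀ x, Continuous fun q => Φ q x := by
    intro x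
    exact continuous_finset_sum _ fun y _ => (continuous_apply y).mul continuous_const
  set g : (Y → ℝ) → ℝ := fun q => univ.sup' univ_nonempty (fun x => Φ q x) with hg
  have hgcont : Continuous g :=
    Continuous.finset_sup'_apply univ_nonempty (fun x _ => hΦcont x)
  obtain ⟨q₀, hq₀mem, hq₀min⟩ :=
    (isCompact_stdSimplex ℝ Y).exists_isMinOn
      ⟨Pi.single (Classical.arbitrary Y) 1, single_mem_stdSimplex ℝ _⟩ hgcont.continuousOn
  set v : ℝ := g q₀ with hv
  have hqside : ∀ x, Φ q₀ x ≤ v := fun x => Finset.le_sup' _ (mem_univ x)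
  -- the open convex set
  set U : Set (X → ℝ) := {z | ∀ x, z x < v} with hU
  have hUopen : IsOpen U := by
    have : U = ⋂ x, (fun z : X → ℝ => z x) ⁻¹' Set.Iio v := by
      ext z; simp [hU]
    rw [this]
    exact isOpen_iInter_of_finite fun x => (isOpen_Iio).preimage (continuous_apply x)
  have hUconv : Convex ℝ U := by
    have : U = ⋂ x, (LinearMap.proj x : (X → ℝ) →ₗ[ℝ] ℝ) ⁻¹' Set.Iio v := by
      ext z; simp [hU]
    rw [this]
    exact convex_iInter fun x => (convex_Iio v).linear_preimage _
  -- the image convex set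
  set L : (Y → ℝ) →ₗ[ℝ] (X → ℝ) :=
    { toFun := Φ
      map_add' := by intro a b; funext x; simp [hΦ, add_mul, Finset.sum_add_distrib]
      map_smul' := by
        intro c a; funext x; simp [hΦ, Finset.mul_sum, mul_assoc] } with hL
  set S : Set (X → ℝ) := L '' stdSimplex ℝ Y with hS
  have hSconv : Convex ℝ S := (convex_stdSimplex ℝ Y).linear_image L
  have hdisj : Disjoint U S := by
    rw [Set.disjoint_left]
    rintro z hz ⟨q, hq, rfl⟩
    have h1 : g q < v := by
      rw [hg]
      exact (Finset.sup'_lt_iff _).2 fun x _ => hz x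
    exact absurd (hq₀min hq) (not_le.2 h1)
  obtain ⟨f, t, hfU, hfS⟩ := geometric_hahn_banach_open hUconv hUopen hSconv hdisj
  set lam : X → ℝ := fun x => f (Pi.single x 1) with hlam
  have hrepr : ∀ z : X → ℝ, f z = ∑ x, z x * lam x := by
    intro z
    conv_lhs => rw [pi_eq_sum_univ z]
    rw [map_sum]
    simp only [_root_.map_smul, smul_eq_mul]
    refine Finset.sum_congr rfl fun x _ => ?_
    show z x * (f fun j => if x = j then 1 else 0) = z x * f (Pi.single x 1)
    congr 2
    funext j
    simp [Pi.single_apply, eq_comm]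
  have hconstmem : ∀ c, c < v → (fun _ : X => c) ∈ U := fun c hc x => hc
  have hfconst : ∀ c : ℝ, f (fun _ => c) = c * ∑ x, lam x := by
    intro c; rw [hrepr]; rw [Finset.mul_sum]
  have hlamnn : ∀ x, 0 ≤ lam x := by
    intro x
    by_contra hneg
    push_neg at hneg
    set t₀ : ℝ := max 0 (((v - 1) * ∑ x, lam x - t) / lam x) with ht₀
    have ht₀0 : 0 ≤ t₀ := le_max_left _ _
    set e₁ : X → ℝ := Pi.single x 1 with he₁
    set e : X → ℝ := (fun _ => v - 1) - t₀ • e₁ with he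
    have hmem : e ∈ U := by
      intro x'
      have h1 : (0:ℝ) ≤ t₀ • e₁ x' := by
        apply smul_nonneg ht₀0
        by_cases h : x' = x <;> simp [he₁, Pi.single_apply, h]
      have h2 : e x' ≤ v - 1 := by
        rw [he]
        simp only [Pi.sub_apply, Pi.smul_apply]
        simp only [smul_eq_mul] at h1 ⊢
        linarith
      linarith
    have hval : f e = (v - 1) * (∑ x, lam x) - t₀ * lam x := by
      rw [he, map_sub, _root_.map_smul, hfconst]
      simp only [smul_eq_mul, he₁, hlam]
    have hlt := hfU _ hmem
    rw [hval] at hlt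
    have hge : ((v - 1) * ∑ x, lam x - t) / lam x ≤ t₀ := le_max_right _ _
    have : (v - 1) * (∑ x, lam x) - t ≥ t₀ * lam x := by
      rw [div_le_iff_of_neg hneg] at hge
      linarith [hge]
    linarith
  have hSnn : (0:ℝ) ≤ ∑ x, lam x := Finset.sum_nonneg fun x _ => hlamnn x
  have hSpos : (0:ℝ) < ∑ x, lam x := by
    rcases lt_or_eq_of_le hSnn with h | h
    · exact h
    · exfalso
      have hz : ∀ x ∈ univ, lam x = 0 :=
        (Finset.sum_eq_zero_iff_of_nonneg (fun x _ => hlamnn x)).1 h.symm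
      have hf0 : ∀ z : X → ℝ, f z = 0 := by
        intro z; rw [hrepr]
        exact Finset.sum_eq_zero fun x _ => by rw [hz x (mem_univ x), mul_zero]
      have h1 : (0:ℝ) < t := by
        have := hfU _ (hconstmem (v - 1) (by linarith))
        rwa [hf0] at this
      have h2 : t ≤ 0 := by
        have := hfS _ ⟨q₀, hq₀mem, rfl⟩
        rwa [hf0] at this
      linarith
  have hvt : v * (∑ x, lam x) ≤ t := by
    by_contra hlt
    push_neg at hlt
    set ε : ℝ := (v * (∑ x, lam x) - t) / (2 * ∑ x, lam x) with hε
    have hεpos : 0 < ε := div_pos (by linarith) (by linarith)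
    have := hfU _ (hconstmem (v - ε) (by linarith))
    rw [hfconst] at this
    have hh : (v - ε) * (∑ x, lam x) = v * (∑ x, lam x) - ε * (∑ x, lam x) := by ring
    have hε2 : ε * (∑ x, lam x) = (v * (∑ x, lam x) - t) / 2 := by
      rw [hε]; field_simp
    rw [hh, hε2] at this
    linarith
  refine ⟨v, fun x => lam x / ∑ x', lam x', q₀, ?_, hq₀mem, ?_, hqside⟩
  · constructor
    · intro x; exact div_nonneg (hlamnn x) hSnn
    · rw [← Finset.sum_div]
      exact div_self (ne_of_gt hSpos)
  · intro y
    have hmemS : (fun x => A x y) ∈ S := by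
      refine ⟨Pi.single y 1, single_mem_stdSimplex ℝ y, ?_⟩
      funext x
      simp [hL, hΦ, Pi.single_apply, mul_ite, Finset.sum_ite_eq']
    have h1 : t ≤ ∑ x, A x y * lam x := by
      have := hfS _ hmemS
      rwa [hrepr] at this
    have : v * (∑ x, lam x) ≤ ∑ x, A x y * lam x := le_trans hvt h1
    rw [Finset.sum_congr rfl (fun x _ => by rw [div_mul_eq_mul_div])]
    rw [← Finset.sum_div]
    rw [le_div_iff₀ hSpos]
    calc v * (∑ x', lam x') ≤ ∑ x, A x y * lam x := this
      _ = ∑ x, lam x * A x y := by simp [mul_comm]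
end Minimax

section MatVal
variable {X Y : Type} [Fintype X] [Nonempty X] [Fintype Y] [Nonempty Y]

noncomputable def matVal (A : X → Y → ℝ) : ℝ := (bw_minimax_exists A).choose
noncomputable def optI (A : X → Y → ℝ) : X → ℝ := (bw_minimax_exists A).choose_spec.choose
noncomputable def optII (A : X → Y → ℝ) : Y → ℝ :=
  (bw_minimax_exists A).choose_spec.choose_spec.choose

lemma optI_mem (A : X → Y → ℝ) : optI A ∈ stdSimplex ℝ X :=
  (bw_minimax_exists A).choose_spec.choose_spec.choose_spec.1
lemma optII_mem (A : X → Y → ℝ) : optII A ∈ stdSimplex ℝ Y :=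
  (bw_minimax_exists A).choose_spec.choose_spec.choose_spec.2.1
lemma optI_ge (A : X → Y → ℝ) : ∀ y, matVal A ≤ ∑ x, optI A x * A x y :=
  (bw_minimax_exists A).choose_spec.choose_spec.choose_spec.2.2.1
lemma optII_le (A : X → Y → ℝ) : ∀ x, ∑ y, optII A y * A x y ≤ matVal A :=
  (bw_minimax_exists A).choose_spec.choose_spec.choose_spec.2.2.2

lemma stdSimplex_sum {ι : Type} [Fintype ι] {q : ι → ℝ} (h : q ∈ stdSimplex ℝ ι) :
    ∑ i, q i = 1 := h.2
lemma stdSimplex_nonneg {ι : Type} [Fintype ι] {q : ι → ℝ} (h : q ∈ stdSimplex ℝ ι) (i : ι) :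
    0 ≤ q i := h.1 i

lemma bw_saddle_le {A : X → Y → ℝ} {v1 v2 : ℝ} {ρ : X → ℝ} {q : Y → ℝ}
    (hρ : ρ ∈ stdSimplex ℝ X) (hq : q ∈ stdSimplex ℝ Y)
    (h1 : ∀ y, v1 ≤ ∑ x, ρ x * A x y) (h2 : ∀ x, ∑ y, q y * A x y ≤ v2) : v1 ≤ v2 := by
  have e1 : v1 = ∑ y, q y * v1 := by
    rw [← Finset.sum_mul, stdSimplex_sum hq, one_mul]
  have e2 : v2 = ∑ x, ρ x * v2 := by
    rw [← Finset.sum_mul, stdSimplex_sum hρ, one_mul]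
  calc v1 = ∑ y, q y * v1 := e1
    _ ≤ ∑ y, q y * ∑ x, ρ x * A x y :=
      Finset.sum_le_sum fun y _ =>
        mul_le_mul_of_nonneg_left (h1 y) (stdSimplex_nonneg hq y)
    _ = ∑ x, ρ x * ∑ y, q y * A x y := by
      simp_rw [Finset.mul_sum]
      rw [Finset.sum_comm]
      congr 1; funext y; congr 1; funext x; ring
    _ ≤ ∑ x, ρ x * v2 :=
      Finset.sum_le_sum fun x _ =>
        mul_le_mul_of_nonneg_left (h2 x) (stdSimplex_nonneg hρ x)
    _ = v2 := e2.symm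

lemma matVal_mono {A B : X → Y → ℝ} (h : ∀ x y, A x y ≤ B x y) : matVal A ≤ matVal B := by
  refine bw_saddle_le (A := B) (optI_mem A) (optII_mem B) (fun y => ?_) (optII_le B)
  refine le_trans (optI_ge A y) (Finset.sum_le_sum fun x _ => ?_)
  exact mul_le_mul_of_nonneg_left (h x y) (stdSimplex_nonneg (optI_mem A) x)

lemma matVal_const (c : ℝ) : matVal (fun (_ : X) (_ : Y) => c) = c := by
  set A : X → Y → ℝ := fun _ _ => c with hA
  apply le_antisymm
  · refine bw_saddle_le (optI_mem A) (optII_mem A) (optI_ge A) fun x => le_of_eq ?_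
    rw [← Finset.sum_mul, stdSimplex_sum (optII_mem A), one_mul]
  · refine bw_saddle_le (optI_mem A) (optII_mem A) (fun y => le_of_eq ?_) (optII_le A)
    rw [← Finset.sum_mul, stdSimplex_sum (optI_mem A), one_mul]

lemma matVal_add_const (A : X → Y → ℝ) (c : ℝ) :
    matVal (fun x y => A x y + c) = matVal A + c := by
  apply le_antisymm
  · refine bw_saddle_le (optI_mem _) (optII_mem A) (optI_ge _) fun x => ?_
    have e : ∑ y, optII A y * (A x y + c) = (∑ y, optII A y * A x y) + (∑ y, optII A y) * c := by
      rw [Finset.sum_mul, ← Finset.sum_add_distrib]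
      congr 1; funext y; ring
    rw [e, stdSimplex_sum (optII_mem A), one_mul]
    exact add_le_add_left (optII_le A x) c
  · refine bw_saddle_le (optI_mem A) (optII_mem _) (fun y => ?_) (optII_le _)
    have e : ∑ x, optI A x * (A x y + c) = (∑ x, optI A x * A x y) + (∑ x, optI A x) * c := by
      rw [Finset.sum_mul, ← Finset.sum_add_distrib]
      congr 1; funext x; ring
    rw [e, stdSimplex_sum (optI_mem A), one_mul]
    exact add_le_add_left (optI_ge A y) c

lemma matVal_le_of_le_add {A B : X → Y → ℝ} {c : ℝ} (h : ∀ x y, A x y ≤ B x y + c) :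
    matVal A ≤ matVal B + c := by
  calc matVal A ≤ matVal (fun x y => B x y + c) := matVal_mono h
    _ = matVal B + c := matVal_add_const B c

lemma matVal_nonneg {A : X → Y → ℝ} (h : ∀ x y, 0 ≤ A x y) : 0 ≤ matVal A := by
  have := matVal_mono (A := fun (_ : X) (_ : Y) => (0:ℝ)) (B := A) h
  rwa [matVal_const] at this

lemma matVal_le_one {A : X → Y → ℝ} (h : ∀ x y, A x y ≤ 1) : matVal A ≤ 1 := by
  have := matVal_mono (A := A) (B := fun (_ : X) (_ : Y) => (1:ℝ)) h
  rwa [matVal_const] at this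

lemma matVal_iSup {A : ℕ → X → Y → ℝ} (hmono : ∀ x y, Monotone fun n => A n x y)
    (hbd : ∀ x y, BddAbove (Set.range fun n => A n x y)) :
    matVal (fun x y => ⨆ n, A n x y) = ⨆ n, matVal (A n) := by
  classical
  have hle : ∀ n, matVal (A n) ≤ matVal (fun x y => ⨆ m, A m x y) := fun n =>
    matVal_mono fun x y => le_ciSup (hbd x y) n
  have hbd2 : BddAbove (Set.range fun n => matVal (A n)) :=
    ⟨matVal (fun x y => ⨆ m, A m x y), by rintro _ ⟨n, rfl⟩; exact hle n⟩
  apply le_antisymm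
  · apply le_of_forall_pos_le_add
    intro ε hε
    have hchoice : ∀ z : X × Y, ∃ n, (⨆ m, A m z.1 z.2) - ε < A n z.1 z.2 := by
      intro z
      obtain ⟨n, hn⟩ := exists_lt_of_lt_ciSup
        (show (⨆ m, A m z.1 z.2) - ε < ⨆ m, A m z.1 z.2 by
          have h0 : (0:ℝ) < ε := hε
          linarith [le_refl (⨆ m, A m z.1 z.2)])
      exact ⟨n, hn⟩
    choose nf hnf using hchoice
    set N : ℕ := Finset.univ.sup nf with hN
    have hkey : ∀ x y, (⨆ m, A m x y) ≤ A N x y + ε := by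
      intro x y
      have h1 := hnf (x, y)
      have h2 : A (nf (x, y)) x y ≤ A N x y :=
        hmono x y (Finset.le_sup (Finset.mem_univ (x, y)))
      simp only at h1
      linarith
    calc matVal (fun x y => ⨆ m, A m x y) ≤ matVal (A N) + ε := matVal_le_of_le_add hkey
      _ ≤ (⨆ n, matVal (A n)) + ε := add_le_add_left (le_ciSup hbd2 N) ε
  · exact ciSup_le hle

end MatVal

section Game
variable {X Y : Type} [Fintype X] [Nonempty X] [Fintype Y] [Nonempty Y]

/-! ### basic list lemmas -/

lemma bw_prod_snoc {M : Type} [CommMonoid M] {m n : ℕ} (hlen : m = n + 1) (G : Fin m → M) :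
    ∏ i, G i = (∏ i : Fin n, G (Fin.cast hlen.symm i.castSucc)) *
      G (Fin.cast hlen.symm (Fin.last n)) := by
  subst hlen
  simpa using Fin.prod_univ_castSucc G

lemma bw_take_append {Z : Type} (p : List Z) (z : Z) {i : ℕ} (h : i ≤ p.length) :
    (p ++ [z]).take i = p.take i :=
  List.take_append_of_le_length h

lemma bw_get_append {Z : Type} (p : List Z) (z : Z) {i : ℕ} (h : i < p.length)
    (h' : i < (p ++ [z]).length) : (p ++ [z]).get ⟨i, h'⟩ = p.get ⟨i, h⟩ := by
  simp [List.get_eq_getElem, List.getElem_append_left h]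

lemma bw_get_last {Z : Type} (p : List Z) (z : Z) (h' : p.length < (p ++ [z]).length) :
    (p ++ [z]).get ⟨p.length, h'⟩ = z := by
  simp [List.get_eq_getElem]

lemma cyl_append_subset {Z : Type} (p : List Z) (z : Z) : cyl (p ++ [z]) ⊆ cyl p := by
  intro w hw i
  have hi : (i : ℕ) < (p ++ [z]).length := by
    simp only [List.length_append, List.length_cons, List.length_nil]
    omega
  have := hw ⟨i, hi⟩
  rw [bw_get_append p z i.2 hi] at this
  simpa using this

lemma mem_cyl_ofFn {Z : Type} {n : ℕ} (f : Fin n → Z) (w : Play Z) :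
    w ∈ cyl (List.ofFn f) ↔ ∀ i : Fin n, w i.1 = f i := by
  constructor
  · intro hw i
    have hi : (i : ℕ) < (List.ofFn f).length := by simp [i.2]
    have := hw ⟨i, hi⟩
    simpa [List.get_ofFn] using this
  · intro h i
    have hi : (i : ℕ) < n := by simpa using i.2
    have := h ⟨i, hi⟩
    simpa [List.get_ofFn] using this

lemma bw_ofFn_snoc {Z : Type} {n : ℕ} (f : Fin n → Z) (z : Z) :
    List.ofFn (Fin.snoc f z) = List.ofFn f ++ [z] := by
  rw [List.ofFn_succ']
  simp [List.concat_eq_append]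

/-! ### the value functions -/

def bwGood (O : Set (Play (X × Y))) (p : List (X × Y)) : Prop := cyl p ⊆ O

open Classical in
noncomputable def bwU (O : Set (Play (X × Y))) : ℕ → List (X × Y) → ℝ
  | 0, p => if bwGood O p then 1 else 0
  | n+1, p => matVal fun x y => bwU O n (p ++ [(x, y)])

noncomputable def bwW (O : Set (Play (X × Y))) (p : List (X × Y)) : ℝ := ⨆ n, bwU O n p

variable {O : Set (Play (X × Y))}

lemma bwGood_snoc {p : List (X × Y)} (h : bwGood O p) (z : X × Y) : bwGood O (p ++ [z]) :=
  fun w hw => h (cyl_append_subset p z hw)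

lemma bwU_nonneg : ∀ n p, 0 ≤ bwU O n p := by
  intro n
  induction n with
  | zero => intro p; rw [bwU]; split <;> norm_num
  | succ n ih => intro p; rw [bwU]; exact matVal_nonneg fun x y => ih _

lemma bwU_le_one : ∀ n p, bwU O n p ≤ 1 := by
  intro n
  induction n with
  | zero => intro p; rw [bwU]; split <;> norm_num
  | succ n ih => intro p; rw [bwU]; exact matVal_le_one fun x y => ih _

lemma bwU_eq_one_of_good : ∀ n {p}, bwGood O p → bwU O n p = 1 := by
  intro n
  induction n with
  | zero => intro p h; rw [bwU]; exact if_pos h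
  | succ n ih =>
    intro p h
    rw [bwU]
    have : (fun x y => bwU O n (p ++ [(x, y)])) = fun (_ : X) (_ : Y) => (1:ℝ) := by
      funext x y; exact ih (bwGood_snoc h (x, y))
    rw [this, matVal_const]

lemma bwU_mono_succ : ∀ n p, bwU O n p ≤ bwU O (n+1) p := by
  intro n
  induction n with
  | zero =>
    intro p
    by_cases h : bwGood O p
    · rw [bwU_eq_one_of_good 0 h, bwU_eq_one_of_good 1 h]
    · rw [bwU, if_neg h]
      exact bwU_nonneg 1 p
  | succ n ih =>
    intro p
    rw [bwU, bwU]
    exact matVal_mono fun x y => ih _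

lemma bwU_mono (p : List (X × Y)) : Monotone fun n => bwU O n p :=
  monotone_nat_of_le_succ fun n => bwU_mono_succ n p

lemma bwU_bdd (p : List (X × Y)) : BddAbove (Set.range fun n => bwU O n p) :=
  ⟨1, by rintro _ ⟨n, rfl⟩; exact bwU_le_one n p⟩

lemma bwU_le_bwW (n : ℕ) (p : List (X × Y)) : bwU O n p ≤ bwW O p :=
  le_ciSup (bwU_bdd p) n

lemma bwW_le_one (p : List (X × Y)) : bwW O p ≤ 1 := ciSup_le fun n => bwU_le_one n p

lemma bwW_nonneg (p : List (X × Y)) : 0 ≤ bwW O p :=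
  le_trans (bwU_nonneg 0 p) (bwU_le_bwW 0 p)

lemma bwW_fixed (p : List (X × Y)) :
    bwW O p = matVal fun x y => bwW O (p ++ [(x, y)]) := by
  have h1 : bwW O p = ⨆ n, bwU O (n+1) p := by
    apply le_antisymm
    · refine ciSup_le fun n => ?_
      exact le_trans (bwU_mono_succ n p) (le_ciSup (f := fun m => bwU O (m+1) p)
        ⟨1, by rintro _ ⟨m, rfl⟩; exact bwU_le_one _ p⟩ n)
    · exact ciSup_le fun n => le_ciSup (bwU_bdd p) (n+1)
  rw [h1]
  have h2 : ∀ n, bwU O (n+1) p = matVal fun x y => bwU O n (p ++ [(x, y)]) := fun n => by rw [bwU]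
  simp_rw [h2]
  have h3 := matVal_iSup (A := fun n x y => bwU O n (p ++ [(x, y)]))
    (fun x y a b hab => bwU_mono _ hab) (fun x y => bwU_bdd _)
  rw [← h3]
  rfl

end Game

section Prob
variable {X Y : Type} [Fintype X] [Nonempty X] [Fintype Y] [Nonempty Y]

noncomputable def pmfOfSimplex {α : Type} [Fintype α] (ρ : α → ℝ) (h : ρ ∈ stdSimplex ℝ α) :
    PMF α :=
  PMF.ofFintype (fun a => ENNReal.ofReal (ρ a)) (by
    rw [← ENNReal.ofReal_sum_of_nonneg fun i _ => h.1 i, h.2, ENNReal.ofReal_one])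

lemma pmfOfSimplex_toReal {α : Type} [Fintype α] (ρ : α → ℝ) (h : ρ ∈ stdSimplex ℝ α) (a : α) :
    ((pmfOfSimplex ρ h) a).toReal = ρ a := by
  rw [pmfOfSimplex, PMF.ofFintype_apply, ENNReal.toReal_ofReal (h.1 a)]

lemma pmf_sum_one {α : Type} [Fintype α] (pp : PMF α) : ∑ a, pp a = 1 := by
  rw [← tsum_fintype (L := SummationFilter.unconditional _)]; exact pp.tsum_coe

lemma pmf_toReal_sum_one {α : Type} [Fintype α] (pp : PMF α) : ∑ a, (pp a).toReal = 1 := by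
  rw [← ENNReal.toReal_sum fun a _ => (pp.apply_ne_top a), pmf_sum_one, ENNReal.toReal_one]

lemma pmf_toReal_mem_stdSimplex {α : Type} [Fintype α] (pp : PMF α) :
    (fun a => (pp a).toReal) ∈ stdSimplex ℝ α :=
  ⟨fun a => ENNReal.toReal_nonneg, pmf_toReal_sum_one pp⟩

variable (σ : Strategy (X × Y) X) (τ : Strategy (X × Y) Y)

lemma cylProb_nil : cylProb σ τ [] = 1 := by
  simp [cylProb]

lemma cylProb_snoc (p : List (X × Y)) (z : X × Y) :
    cylProb σ τ (p ++ [z]) = cylProb σ τ p * (σ p z.1 * τ p z.2) := by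
  have hlen : (p ++ [z]).length = p.length + 1 := by simp
  rw [cylProb, bw_prod_snoc hlen]
  congr 1
  · rw [cylProb]
    refine Finset.prod_congr rfl fun i _ => ?_
    have hvi : (i:ℕ) < (p ++ [z]).length := by rw [hlen]; omega
    have e1 : (p ++ [z]).take ((Fin.cast hlen.symm i.castSucc) : ℕ) = p.take i := by
      simpa using bw_take_append p z (le_of_lt i.2)
    have e2 : (p ++ [z]).get (Fin.cast hlen.symm i.castSucc) = p.get i := by
      have he : (Fin.cast hlen.symm i.castSucc) = ⟨(i:ℕ), hvi⟩ := by ext; simp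
      rw [he, bw_get_append p z i.2]
    rw [e1, e2]
  · have hvl : p.length < (p ++ [z]).length := by rw [hlen]; omega
    have e1 : (p ++ [z]).take ((Fin.cast hlen.symm (Fin.last p.length)) : ℕ) = p := by
      simpa using (bw_take_append p z le_rfl).trans (List.take_length)
    have e2 : (p ++ [z]).get (Fin.cast hlen.symm (Fin.last p.length)) = z := by
      have he : (Fin.cast hlen.symm (Fin.last p.length)) = ⟨p.length, hvl⟩ := by ext; simp
      rw [he, bw_get_last]
    rw [e1, e2]

lemma cylProb_le_one (p : List (X × Y)) : cylProb σ τ p ≤ 1 := by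
  rw [cylProb]
  refine Finset.prod_le_one (fun i _ => zero_le) fun i _ => ?_
  calc σ (p.take i.1) (p.get i).1 * τ (p.take i.1) (p.get i).2 ≤ 1 * 1 :=
        mul_le_mul' (PMF.coe_le_one _ _) (PMF.coe_le_one _ _)
    _ = 1 := one_mul 1

lemma cylProb_ne_top (p : List (X × Y)) : cylProb σ τ p ≠ ⊤ :=
  ne_top_of_le_ne_top ENNReal.one_ne_top (cylProb_le_one σ τ p)

lemma sum_pair_one (p : List (X × Y)) : ∑ z : X × Y, σ p z.1 * τ p z.2 = 1 := by
  rw [Fintype.sum_prod_type, ← Finset.sum_mul_sum]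
  rw [pmf_sum_one, pmf_sum_one, one_mul]

noncomputable def bwP (σ : Strategy (X × Y) X) (τ : Strategy (X × Y) Y)
    (p : List (X × Y)) : ℝ := (cylProb σ τ p).toReal

lemma bwP_nil : bwP σ τ [] = 1 := by rw [bwP, cylProb_nil, ENNReal.toReal_one]

lemma bwP_nonneg (p : List (X × Y)) : 0 ≤ bwP σ τ p := ENNReal.toReal_nonneg

lemma bwP_snoc (p : List (X × Y)) (z : X × Y) :
    bwP σ τ (p ++ [z]) = bwP σ τ p * ((σ p z.1).toReal * (τ p z.2).toReal) := by
  rw [bwP, cylProb_snoc, ENNReal.toReal_mul, ENNReal.toReal_mul]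
  rfl

noncomputable def bwEx (n : ℕ) (σ : Strategy (X × Y) X) (τ : Strategy (X × Y) Y)
    (g : List (X × Y) → ℝ) : ℝ :=
  ∑ f : Fin n → X × Y, bwP σ τ (List.ofFn f) * g (List.ofFn f)

lemma bwEx_zero (g : List (X × Y) → ℝ) : bwEx 0 σ τ g = g [] := by
  rw [bwEx]
  rw [Fintype.sum_unique]
  rw [List.ofFn_zero, bwP_nil, one_mul]

lemma bw_sum_snoc {M : Type} [AddCommMonoid M] (n : ℕ) (F : List (X × Y) → M) :
    ∑ f : Fin (n+1) → X × Y, F (List.ofFn f) =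
      ∑ f : Fin n → X × Y, ∑ z : X × Y, F (List.ofFn f ++ [z]) := by
  have h := Fintype.sum_equiv (Fin.snocEquiv (fun _ : Fin (n+1) => X × Y))
    (fun q : (X × Y) × (Fin n → X × Y) => F (List.ofFn q.2 ++ [q.1]))
    (fun f : Fin (n+1) → X × Y => F (List.ofFn f))
    (fun q => (congrArg F (bw_ofFn_snoc q.2 q.1)).symm)
  rw [← h, Fintype.sum_prod_type]
  exact Finset.sum_comm

lemma bwEx_succ (n : ℕ) (g : List (X × Y) → ℝ) :
    bwEx (n+1) σ τ g = ∑ f : Fin n → X × Y, ∑ z : X × Y,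
      bwP σ τ (List.ofFn f ++ [z]) * g (List.ofFn f ++ [z]) := by
  rw [bwEx, bw_sum_snoc n (fun p => bwP σ τ p * g p)]

lemma cylProb_mass : ∀ n, ∑ f : Fin n → X × Y, cylProb σ τ (List.ofFn f) = 1 := by
  intro n
  induction n with
  | zero => rw [Fintype.sum_unique, List.ofFn_zero, cylProb_nil]
  | succ n ih =>
    rw [bw_sum_snoc n (cylProb σ τ)]
    calc ∑ f : Fin n → X × Y, ∑ z : X × Y, cylProb σ τ (List.ofFn f ++ [z])
        = ∑ f : Fin n → X × Y, cylProb σ τ (List.ofFn f) := by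
          refine Finset.sum_congr rfl fun f _ => ?_
          simp_rw [cylProb_snoc]
          rw [← Finset.mul_sum, sum_pair_one, mul_one]
      _ = 1 := ih

lemma bwP_mass (n : ℕ) : ∑ f : Fin n → X × Y, bwP σ τ (List.ofFn f) = 1 := by
  simp only [bwP]
  rw [← ENNReal.toReal_sum fun f _ => cylProb_ne_top σ τ _]
  rw [cylProb_mass, ENNReal.toReal_one]

end Prob

section Claims
variable {X Y : Type} [Fintype X] [Nonempty X] [Fintype Y] [Nonempty Y]

lemma matVal_le_sum (M : X → Y → ℝ) {q : Y → ℝ} (hq : q ∈ stdSimplex ℝ Y) :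
    matVal M ≤ ∑ z : X × Y, optI M z.1 * q z.2 * M z.1 z.2 := by
  rw [Fintype.sum_prod_type]
  have e : ∀ x, ∑ y, optI M x * q y * M x y = ∑ y, q y * (optI M x * M x y) := by
    intro x; refine Finset.sum_congr rfl fun y _ => by ring
  simp_rw [e]
  rw [Finset.sum_comm]
  have e2 : ∀ y, ∑ x, q y * (optI M x * M x y) = q y * ∑ x, optI M x * M x y := by
    intro y; rw [Finset.mul_sum]
  simp_rw [e2]
  calc matVal M = ∑ y, q y * matVal M := by
        rw [← Finset.sum_mul, stdSimplex_sum hq, one_mul]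
    _ ≤ ∑ y, q y * ∑ x, optI M x * M x y :=
      Finset.sum_le_sum fun y _ =>
        mul_le_mul_of_nonneg_left (optI_ge M y) (stdSimplex_nonneg hq y)

lemma sum_le_matVal (M : X → Y → ℝ) {ρ : X → ℝ} (hρ : ρ ∈ stdSimplex ℝ X) :
    ∑ z : X × Y, ρ z.1 * optII M z.2 * M z.1 z.2 ≤ matVal M := by
  rw [Fintype.sum_prod_type]
  have e : ∀ x, ∑ y, ρ x * optII M y * M x y = ρ x * ∑ y, optII M y * M x y := by
    intro x; rw [Finset.mul_sum]; refine Finset.sum_congr rfl fun y _ => by ring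
  simp_rw [e]
  calc ∑ x, ρ x * ∑ y, optII M y * M x y ≤ ∑ x, ρ x * matVal M :=
        Finset.sum_le_sum fun x _ =>
          mul_le_mul_of_nonneg_left (optII_le M x) (stdSimplex_nonneg hρ x)
    _ = matVal M := by rw [← Finset.sum_mul, stdSimplex_sum hρ, one_mul]

variable (O : Set (Play (X × Y)))

noncomputable def bwSigma (N : ℕ) : Strategy (X × Y) X := fun p =>
  pmfOfSimplex (optI fun x y => bwU O (N - p.length - 1) (p ++ [(x, y)])) (optI_mem _)

noncomputable def bwTau : Strategy (X × Y) Y := fun p =>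
  pmfOfSimplex (optII fun x y => bwW O (p ++ [(x, y)])) (optII_mem _)

lemma bw_claimA (N : ℕ) (τ : Strategy (X × Y) Y) :
    bwU O N [] ≤ bwEx N (bwSigma O N) τ (bwU O 0) := by
  have key : ∀ m, m ≤ N → bwU O N [] ≤ bwEx m (bwSigma O N) τ (bwU O (N - m)) := by
    intro m
    induction m with
    | zero => intro _; rw [bwEx_zero]; simp
    | succ m ih =>
      intro hm
      refine le_trans (ih (le_of_lt hm)) ?_
      rw [bwEx_succ]
      rw [bwEx]
      refine Finset.sum_le_sum fun f _ => ?_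
      set p : List (X × Y) := List.ofFn f with hp
      have hplen : p.length = m := by simp [hp]
      set M : X → Y → ℝ := fun x y => bwU O (N - (m+1)) (p ++ [(x, y)]) with hM
      have hσ : bwSigma O N p = pmfOfSimplex (optI M) (optI_mem M) := by
        rw [bwSigma]
        congr 1 <;> rw [hplen] <;> rw [show N - m - 1 = N - (m+1) by omega]
      have huv : bwU O (N - m) p = matVal M := by
        rw [show N - m = (N - (m+1)) + 1 by omega, bwU]
      calc bwP (bwSigma O N) τ p * bwU O (N - m) p
          = bwP (bwSigma O N) τ p * matVal M := by rw [huv]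
        _ ≤ bwP (bwSigma O N) τ p *
            ∑ z : X × Y, optI M z.1 * (τ p z.2).toReal * M z.1 z.2 :=
          mul_le_mul_of_nonneg_left
            (matVal_le_sum M (pmf_toReal_mem_stdSimplex (τ p)))
            (bwP_nonneg _ _ _)
        _ = ∑ z : X × Y, bwP (bwSigma O N) τ (p ++ [z]) * bwU O (N - (m+1)) (p ++ [z]) := by
          rw [Finset.mul_sum]
          refine Finset.sum_congr rfl fun z _ => ?_
          rw [bwP_snoc, hσ, pmfOfSimplex_toReal]
          rw [hM]
          ring
  have := key N le_rfl
  rwa [Nat.sub_self] at this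

lemma bw_claimB (σ : Strategy (X × Y) X) (n : ℕ) :
    bwEx n σ (bwTau O) (bwW O) ≤ bwW O [] := by
  induction n with
  | zero => rw [bwEx_zero]
  | succ n ih =>
    refine le_trans ?_ ih
    rw [bwEx_succ, bwEx]
    refine Finset.sum_le_sum fun f _ => ?_
    set p : List (X × Y) := List.ofFn f with hp
    set M : X → Y → ℝ := fun x y => bwW O (p ++ [(x, y)]) with hM
    have hτ : bwTau O p = pmfOfSimplex (optII M) (optII_mem M) := rfl
    calc ∑ z : X × Y, bwP σ (bwTau O) (p ++ [z]) * bwW O (p ++ [z])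
        = ∑ z : X × Y, bwP σ (bwTau O) p *
            ((σ p z.1).toReal * optII M z.2 * M z.1 z.2) := by
          refine Finset.sum_congr rfl fun z _ => ?_
          rw [bwP_snoc, hτ, pmfOfSimplex_toReal]
          rw [hM]
          ring
      _ = bwP σ (bwTau O) p *
          ∑ z : X × Y, (σ p z.1).toReal * optII M z.2 * M z.1 z.2 := by
          rw [Finset.mul_sum]
      _ ≤ bwP σ (bwTau O) p * matVal M :=
          mul_le_mul_of_nonneg_left
            (sum_le_matVal M (pmf_toReal_mem_stdSimplex (σ p)))
            (bwP_nonneg _ _ _)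
      _ = bwP σ (bwTau O) p * bwW O p := by rw [← bwW_fixed]

lemma bw_claimB' (σ : Strategy (X × Y) X) (n : ℕ) :
    bwEx n σ (bwTau O) (bwU O 0) ≤ bwW O [] := by
  refine le_trans ?_ (bw_claimB O σ n)
  rw [bwEx, bwEx]
  exact Finset.sum_le_sum fun f _ =>
    mul_le_mul_of_nonneg_left (bwU_le_bwW 0 _) (bwP_nonneg _ _ _)

end Claims

section Meas
variable {X Y : Type} [Fintype X] [Nonempty X] [Fintype Y] [Nonempty Y]
  [TopologicalSpace X] [DiscreteTopology X] [TopologicalSpace Y] [DiscreteTopology Y]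
  [MeasurableSpace X] [MeasurableSpace Y]

open Classical in
noncomputable def bwSn (O : Set (Play (X × Y))) (n : ℕ) (σ : Strategy (X × Y) X)
    (τ : Strategy (X × Y) Y) : ENNReal :=
  ∑ f : Fin n → X × Y, if bwGood O (List.ofFn f) then cylProb σ τ (List.ofFn f) else 0

def bwOn (O : Set (Play (X × Y))) (n : ℕ) : Set (Play (X × Y)) :=
  ⋃ (f : Fin n → X × Y) (_ : bwGood O (List.ofFn f)), cyl (List.ofFn f)

variable {O : Set (Play (X × Y))}

lemma bwOn_subset (n : ℕ) : bwOn O n ⊆ O :=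
  Set.iUnion_subset fun f => Set.iUnion_subset fun h => h

lemma mem_cyl_prefix (w : Play (X × Y)) (n : ℕ) :
    w ∈ cyl (List.ofFn fun i : Fin n => w i.1) :=
  (mem_cyl_ofFn _ w).2 fun _ => rfl

lemma bwOn_mono : Monotone (bwOn O) := by
  apply monotone_nat_of_le_succ
  intro n w hw
  simp only [bwOn, Set.mem_iUnion] at hw ⊢
  obtain ⟨f, hgood, hmem⟩ := hw
  refine ⟨Fin.snoc f (w n), ?_, ?_⟩
  · rw [bw_ofFn_snoc]
    exact bwGood_snoc hgood _
  · rw [mem_cyl_ofFn]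
    intro i
    refine Fin.lastCases ?_ ?_ i
    · simp [Fin.snoc_last]
    · intro j
      rw [Fin.snoc_castSucc]
      exact (mem_cyl_ofFn f w).1 hmem j

lemma exists_good_prefix (hO : IsOpen O) {w : Play (X × Y)} (hw : w ∈ O) :
    ∃ n, bwGood O (List.ofFn fun i : Fin n => w i.1) := by
  rw [isOpen_pi_iff] at hO
  obtain ⟨I, t, h1, h2⟩ := hO w hw
  refine ⟨(I.sup id) + 1, ?_⟩
  intro v hv
  apply h2
  intro i hi
  have hlt : i < I.sup id + 1 := Nat.lt_succ_of_le (Finset.le_sup (f := id) hi)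
  have := (mem_cyl_ofFn _ v).1 hv ⟨i, hlt⟩
  simp only at this
  rw [this]
  exact (h1 i hi).2

lemma iUnion_bwOn (hO : IsOpen O) : ⋃ n, bwOn O n = O := by
  apply Set.Subset.antisymm (Set.iUnion_subset fun n => bwOn_subset n)
  intro w hw
  obtain ⟨n, hn⟩ := exists_good_prefix hO hw
  refine Set.mem_iUnion.2 ⟨n, ?_⟩
  simp only [bwOn, Set.mem_iUnion]
  exact ⟨_, hn, mem_cyl_prefix w n⟩

variable {σ : Strategy (X × Y) X} {τ : Strategy (X × Y) Y}
  {m : Measure (Play (X × Y))}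

lemma mu_bwOn_le (hμ : IsInduced σ τ m) (n : ℕ) : m (bwOn O n) ≤ bwSn O n σ τ := by
  classical
  have hset : bwOn O n = ⋃ f : Fin n → X × Y,
      (if bwGood O (List.ofFn f) then cyl (List.ofFn f) else ∅) := by
    rw [bwOn]
    refine Set.iUnion_congr fun f => ?_
    by_cases h : bwGood O (List.ofFn f) <;> simp [h]
  rw [hset]
  refine le_trans (measure_iUnion_le _) ?_
  rw [tsum_fintype, bwSn]
  refine Finset.sum_le_sum fun f _ => ?_
  split
  · exact le_of_eq (hμ.2 _)
  · simp

lemma bwSn_le_mu (hμ : IsInduced σ τ m) (n : ℕ) :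
    bwSn O n σ τ ≤ m O := by
  classical
  set Sn' : ENNReal := ∑ f : Fin n → X × Y,
    if bwGood O (List.ofFn f) then 0 else cylProb σ τ (List.ofFn f) with hSn'
  have hsum : bwSn O n σ τ + Sn' = 1 := by
    rw [bwSn, hSn', ← Finset.sum_add_distrib]
    rw [← cylProb_mass σ τ n]
    refine Finset.sum_congr rfl fun f _ => ?_
    split <;> simp
  have hcompl : Oᶜ ⊆ ⋃ f : Fin n → X × Y,
      (if bwGood O (List.ofFn f) then ∅ else cyl (List.ofFn f)) := by
    intro w hw
    refine Set.mem_iUnion.2 ⟨fun i => w i.1, ?_⟩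
    have hmem := mem_cyl_prefix w n
    split
    · next h => exact absurd (h hmem) hw
    · exact hmem
  have hOc : m Oᶜ ≤ Sn' := by
    refine le_trans (measure_mono hcompl) (le_trans (measure_iUnion_le _) ?_)
    rw [tsum_fintype, hSn']
    refine Finset.sum_le_sum fun f _ => ?_
    split
    · simp
    · exact le_of_eq (hμ.2 _)
  have hone : (1 : ENNReal) ≤ m O + Sn' := by
    have : m Set.univ ≤ m O + m Oᶜ := by
      rw [← Set.union_compl_self O]
      exact measure_union_le O Oᶜ
    have h1 : m Set.univ = 1 := by
      haveI := hμ.1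
      exact measure_univ
    rw [h1] at this
    exact le_trans this (add_le_add_right hOc _)
  have hne : Sn' ≠ ⊤ := by
    intro h
    rw [h] at hsum
    simp at hsum
  have := hsum ▸ hone
  rwa [ENNReal.add_le_add_iff_right hne] at this

lemma mu_eq_iSup_bwSn (hμ : IsInduced σ τ m) (hO : IsOpen O) :
    m O = ⨆ n, bwSn O n σ τ := by
  apply le_antisymm
  · have h1 : m O = ⨆ n, m (bwOn O n) := by
      conv_lhs => rw [← iUnion_bwOn hO]
      exact bwOn_mono.measure_iUnion
    rw [h1]
    exact iSup_mono fun n => mu_bwOn_le hμ n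
  · exact iSup_le fun n => bwSn_le_mu hμ n

lemma bwSn_ne_top (n : ℕ) : bwSn O n σ τ ≠ ⊤ := by
  classical
  rw [bwSn]
  refine (lt_of_le_of_lt ?_ (lt_top_iff_ne_top.2 ENNReal.one_ne_top)).ne
  rw [← cylProb_mass σ τ n]
  refine Finset.sum_le_sum fun f _ => ?_
  split
  · exact le_rfl
  · exact zero_le

lemma bwEx_u0_eq (n : ℕ) : bwEx n σ τ (bwU O 0) = (bwSn O n σ τ).toReal := by
  classical
  rw [bwEx, bwSn, ENNReal.toReal_sum]
  · refine Finset.sum_congr rfl fun f _ => ?_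
    by_cases h : bwGood O (List.ofFn f)
    · rw [bwU_eq_one_of_good 0 h, if_pos h, mul_one, bwP]
    · rw [bwU, if_neg h, if_neg h, mul_zero, ENNReal.toReal_zero]
  · intro f _
    split
    · exact cylProb_ne_top σ τ _
    · simp

end Meas

/-- Blackwell games on open sets are determined. -/
theorem stmt_14 {X Y : Type} [Fintype X] [Nonempty X] [Fintype Y] [Nonempty Y]
    [MeasurableSpace X] [MeasurableSpace Y]
    [TopologicalSpace X] [DiscreteTopology X]
    [TopologicalSpace Y] [DiscreteTopology Y]
    (μ : Strategy (X × Y) X → Strategy (X × Y) Y → Measure (Play (X × Y)))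
    (hμ : ∀ σ τ, IsInduced σ τ (μ σ τ))
    (O : Set (Play (X × Y))) (hO : IsOpen O) :
    (⨆ σ, ⨅ τ, (μ σ τ O).toReal) = ⨅ τ, ⨆ σ, (μ σ τ O).toReal := by
  classical
  haveI : Nonempty (Strategy (X × Y) X) := ⟨fun _ => PMF.pure (Classical.arbitrary X)⟩
  haveI : Nonempty (Strategy (X × Y) Y) := ⟨fun _ => PMF.pure (Classical.arbitrary Y)⟩
  set F : Strategy (X × Y) X → Strategy (X × Y) Y → ℝ := fun σ τ => (μ σ τ O).toReal with hF
  have hμeq : ∀ σ τ, μ σ τ O = ⨆ n, bwSn O n σ τ := fun σ τ => mu_eq_iSup_bwSn (hμ σ τ) hO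
  have hFne : ∀ σ τ, μ σ τ O ≠ ⊤ := fun σ τ => by
    haveI := (hμ σ τ).1
    exact measure_ne_top _ O
  have hF0 : ∀ σ τ, 0 ≤ F σ τ := fun σ τ => ENNReal.toReal_nonneg
  have hF1 : ∀ σ τ, F σ τ ≤ 1 := fun σ τ => by
    haveI := (hμ σ τ).1
    calc (μ σ τ O).toReal ≤ (1 : ENNReal).toReal :=
          ENNReal.toReal_mono ENNReal.one_ne_top prob_le_one
      _ = 1 := ENNReal.toReal_one
  have key1 : ∀ σ τ n, bwEx n σ τ (bwU O 0) ≤ F σ τ := by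
    intro σ τ n
    rw [bwEx_u0_eq, hF]
    refine ENNReal.toReal_mono (hFne σ τ) ?_
    rw [hμeq]
    exact le_iSup (fun n => bwSn O n σ τ) n
  have key2 : ∀ σ, F σ (bwTau O) ≤ bwW O [] := by
    intro σ
    have h1 : μ σ (bwTau O) O ≤ ENNReal.ofReal (bwW O []) := by
      rw [hμeq]
      refine iSup_le fun n => ?_
      rw [← ENNReal.ofReal_toReal (bwSn_ne_top n)]
      refine ENNReal.ofReal_le_ofReal ?_
      rw [← bwEx_u0_eq]
      exact bw_claimB' O σ n
    calc F σ (bwTau O) ≤ (ENNReal.ofReal (bwW O [])).toReal :=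
          ENNReal.toReal_mono ENNReal.ofReal_ne_top h1
      _ = bwW O [] := ENNReal.toReal_ofReal (bwW_nonneg [])
  have key3 : ∀ (τ : Strategy (X × Y) Y) (N : ℕ), bwU O N [] ≤ F (bwSigma O N) τ :=
    fun τ N => le_trans (bw_claimA O N τ) (key1 _ τ N)
  have hbb : ∀ σ, BddBelow (Set.range fun τ => F σ τ) :=
    fun σ => ⟨0, by rintro _ ⟨τ, rfl⟩; exact hF0 σ τ⟩
  have hba : ∀ τ, BddAbove (Set.range fun σ => F σ τ) :=
    fun τ => ⟨1, by rintro _ ⟨σ, rfl⟩; exact hF1 σ τ⟩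
  have hbaI : BddAbove (Set.range fun σ => ⨅ τ, F σ τ) := by
    refine ⟨1, ?_⟩
    rintro _ ⟨σ, rfl⟩
    exact le_trans (ciInf_le (hbb σ) (Classical.arbitrary _)) (hF1 σ _)
  have hbbS : BddBelow (Set.range fun τ => ⨆ σ, F σ τ) := by
    refine ⟨0, ?_⟩
    rintro _ ⟨τ, rfl⟩
    exact le_trans (hF0 (Classical.arbitrary _) τ) (le_ciSup (hba τ) _)
  have step1 : (⨆ σ, ⨅ τ, F σ τ) ≤ ⨅ τ, ⨆ σ, F σ τ := by
    refine le_ciInf fun τ => ciSup_le fun σ => ?_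
    exact le_trans (ciInf_le (hbb σ) τ) (le_ciSup (hba τ) σ)
  have step2 : (⨅ τ, ⨆ σ, F σ τ) ≤ bwW O [] :=
    le_trans (ciInf_le hbbS (bwTau O)) (ciSup_le fun σ => key2 σ)
  have step3 : bwW O [] ≤ ⨆ σ, ⨅ τ, F σ τ := by
    refine ciSup_le fun N => ?_
    refine le_trans ?_ (le_ciSup hbaI (bwSigma O N))
    exact le_ciInf fun τ => key3 τ N
  exact le_antisymm step1 (le_trans step2 step3)
end

section
/- Let O = ⋃ᵢ Oᵢ be a countable union of open subsets of W = (X×Y)ᴺ. Then val(Γ(O)) = lim_{n→∞} val(Γ(⋃_{i≤n} Oᵢ)), where val denotes the (common) value of the corresponding Blackwell games on these open sets. -/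
open MeasureTheory Filter

namespace BW
variable {Z : Type}

lemma mem_cyl_ofFn {w : Play Z} {N : ℕ} {v : Fin N → Z} :
    w ∈ cyl (List.ofFn v) ↔ ∀ i : Fin N, w i = v i := by
  constructor
  · intro h i
    have := h (Fin.cast (List.length_ofFn (f := v)).symm i)
    simpa using this
  · intro h i
    have hl : (List.ofFn v).length = N := by simp
    rcases i with ⟨i, hi⟩
    have := h ⟨i, hl ▸ hi⟩
    simpa [List.get_ofFn] using this

lemma cyl_ofFn_eq {N : ℕ} (v : Fin N → Z) :
    cyl (List.ofFn v) = {w : Play Z | (fun i : Fin N => w i.1) = v} := by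
  ext w
  simp only [Set.mem_setOf_eq, mem_cyl_ofFn, funext_iff]

-- complement of a union over a finset of length-N words
variable [Fintype Z] [DecidableEq Z]

lemma compl_biUnion_cyl {N : ℕ} (S : Finset (Fin N → Z)) :
    (⋃ v ∈ S, cyl (List.ofFn v))ᶜ = ⋃ v ∈ Sᶜ, cyl (List.ofFn v) := by
  ext w
  simp only [Set.mem_compl_iff, Set.mem_iUnion, not_exists, cyl_ofFn_eq,
    Set.mem_setOf_eq, Finset.mem_compl]
  constructor
  · intro h
    exact ⟨fun i => w i.1, fun hs => h _ hs rfl, rfl⟩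
  · rintro ⟨v, hv, rfl⟩ u hu rfl
    exact hv hu

end BW

namespace BW
variable {X Y : Type} [Fintype X] [Fintype Y] [Nonempty X] [Nonempty Y]

lemma cylProb_cons (σ : Strategy (X × Y) X) (τ : Strategy (X × Y) Y)
    (z : X × Y) (p : List (X × Y)) :
    cylProb σ τ (z :: p) =
      σ [] z.1 * τ [] z.2 *
        cylProb (fun l => σ (z :: l)) (fun l => τ (z :: l)) p := by
  simp only [cylProb, List.length_cons]
  rw [Fin.prod_univ_succ]
  simp only [List.take_succ_cons, Fin.val_succ, Fin.val_zero, List.take_zero,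
    List.get_cons_succ, List.get, List.get_cons_zero, List.get_eq_getElem,
    List.getElem_cons_succ, List.getElem_cons_zero]

lemma sum_cylProb_eq_one (N : ℕ) :
    ∀ (σ : Strategy (X × Y) X) (τ : Strategy (X × Y) Y),
      ∑ v : Fin N → X × Y, cylProb σ τ (List.ofFn v) = 1 := by
  induction N with
  | zero =>
    intro σ τ
    have he : ∀ v : Fin 0 → X × Y, cylProb σ τ (List.ofFn v) = 1 := by
      intro v
      haveI : IsEmpty (Fin (List.ofFn v).length) := ⟨fun i => by simpa using i.2⟩
      simp [cylProb, Finset.univ_eq_empty]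
    simpa [Finset.univ_unique] using he default
  | succ n ih =>
    intro σ τ
    rw [← Equiv.sum_comp (Fin.consEquiv fun _ : Fin (n+1) => X × Y)]
    have hofFn : ∀ (z : X × Y) (v : Fin n → X × Y),
        List.ofFn (Fin.cons z v : Fin (n+1) → X × Y) = z :: List.ofFn v := by
      intro z v
      simp [List.ofFn_succ]
    have : ∀ q : (X × Y) × (Fin n → X × Y),
        cylProb σ τ (List.ofFn ((Fin.consEquiv fun _ : Fin (n+1) => X × Y) q)) =
          σ [] q.1.1 * τ [] q.1.2 *
            cylProb (fun l => σ (q.1 :: l)) (fun l => τ (q.1 :: l))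
              (List.ofFn q.2) := by
      rintro ⟨z, v⟩
      simp only [Fin.consEquiv, Equiv.coe_fn_mk, hofFn, cylProb_cons]
    rw [Finset.sum_congr rfl fun q _ => this q]
    rw [Fintype.sum_prod_type]
    have h1 : ∀ z : X × Y,
        ∑ v : Fin n → X × Y,
          σ [] z.1 * τ [] z.2 *
            cylProb (fun l => σ (z :: l)) (fun l => τ (z :: l)) (List.ofFn v)
          = σ [] z.1 * τ [] z.2 := by
      intro z
      rw [← Finset.mul_sum, ih, mul_one]
    rw [Finset.sum_congr rfl fun z _ => h1 z]
    rw [Fintype.sum_prod_type]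
    have hx : ∑ x : X, (σ [] x : ENNReal) = 1 := by
      rw [← tsum_fintype (L := SummationFilter.unconditional _)]; exact (σ []).tsum_coe
    have hy : ∑ y : Y, (τ [] y : ENNReal) = 1 := by
      rw [← tsum_fintype (L := SummationFilter.unconditional _)]; exact (τ []).tsum_coe
    calc ∑ x : X, ∑ y : Y, σ [] x * τ [] y
        = ∑ x : X, σ [] x * ∑ y : Y, τ [] y := by
          exact Finset.sum_congr rfl fun x _ => by rw [← Finset.mul_sum]
      _ = 1 := by rw [hy]; simpa using hx

end BW

namespace BW
set_option linter.unusedSectionVars false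

section Meas
variable {X Y : Type} [Fintype X] [Fintype Y] [Nonempty X] [Nonempty Y]
  [MeasurableSpace X] [MeasurableSpace Y]
  [DecidableEq X] [DecidableEq Y]

lemma measure_biUnion_cyl (σ : Strategy (X × Y) X) (τ : Strategy (X × Y) Y)
    (μ : Measure (Play (X × Y))) (h1 : IsProbabilityMeasure μ)
    (h2 : ∀ p, μ (cyl p) = cylProb σ τ p)
    {N : ℕ} (S : Finset (Fin N → X × Y)) :
    μ (⋃ v ∈ S, cyl (List.ofFn v)) = ∑ v ∈ S, cylProb σ τ (List.ofFn v) := by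
  have hle : ∀ T : Finset (Fin N → X × Y),
      μ (⋃ v ∈ T, cyl (List.ofFn v)) ≤ ∑ v ∈ T, cylProb σ τ (List.ofFn v) := by
    intro T
    refine le_trans (measure_biUnion_finset_le T _) ?_
    exact le_of_eq (Finset.sum_congr rfl fun v _ => h2 _)
  refine le_antisymm (hle S) ?_
  have hsum : ∑ v ∈ S, cylProb σ τ (List.ofFn v)
      + ∑ v ∈ Sᶜ, cylProb σ τ (List.ofFn v) = 1 := by
    rw [Finset.sum_add_sum_compl]
    exact sum_cylProb_eq_one N σ τ
  have hne : ∑ v ∈ Sᶜ, cylProb σ τ (List.ofFn v) ≠ ⊤ := by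
    intro h
    rw [h, add_top] at hsum
    exact ENNReal.top_ne_one hsum
  have hcover : (1:ENNReal) ≤ μ (⋃ v ∈ S, cyl (List.ofFn v))
      + ∑ v ∈ Sᶜ, cylProb σ τ (List.ofFn v) := by
    calc (1:ENNReal) = μ Set.univ := measure_univ.symm
      _ = μ ((⋃ v ∈ S, cyl (List.ofFn v)) ∪ (⋃ v ∈ S, cyl (List.ofFn v))ᶜ) := by
          rw [Set.union_compl_self]
      _ ≤ μ (⋃ v ∈ S, cyl (List.ofFn v)) + μ ((⋃ v ∈ S, cyl (List.ofFn v))ᶜ) :=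
          measure_union_le _ _
      _ ≤ _ := by
          rw [compl_biUnion_cyl]
          exact add_le_add_right (hle Sᶜ) _
  rw [← hsum] at hcover
  exact (ENNReal.add_le_add_iff_right hne).1 hcover

end Meas

section Approx
variable {Z : Type} [TopologicalSpace Z] [DiscreteTopology Z]

lemma exists_cyl_subset {V : Set (Play Z)} (hV : IsOpen V) {w : Play Z} (hw : w ∈ V) :
    ∃ N, cyl (List.ofFn fun i : Fin N => w i.1) ⊆ V := by
  obtain ⟨I, u, hu, hsub⟩ := isOpen_pi_iff.1 hV w hw
  refine ⟨I.sup id + 1, ?_⟩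
  intro w' hw'
  apply hsub
  intro a ha
  have hwa : w' a = w a :=
    mem_cyl_ofFn.1 hw' ⟨a, Nat.lt_succ_of_le (Finset.le_sup (f := id) ha)⟩
  rw [hwa]
  exact (hu a ha).2

variable [Fintype Z] [DecidableEq Z]

noncomputable def appSet (V : Set (Play Z)) (N : ℕ) : Finset (Fin N → Z) :=
  @Finset.filter _ (fun v => cyl (List.ofFn v) ⊆ V) (Classical.decPred _) Finset.univ

lemma mem_appSet_iff {V : Set (Play Z)} {N : ℕ} {v : Fin N → Z} :
    v ∈ appSet V N ↔ cyl (List.ofFn v) ⊆ V := by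
  simp [appSet, Finset.mem_filter]

def appU (V : Set (Play Z)) (N : ℕ) : Set (Play Z) :=
  ⋃ v ∈ appSet V N, cyl (List.ofFn v)

lemma appU_subset (V : Set (Play Z)) (N : ℕ) : appU V N ⊆ V := by
  refine Set.iUnion₂_subset fun v hv => mem_appSet_iff.1 hv

lemma appU_mono_succ (V : Set (Play Z)) (N : ℕ) : appU V N ⊆ appU V (N + 1) := by
  rintro w hw
  rw [appU, Set.mem_iUnion₂] at hw
  obtain ⟨v, hv, hwv⟩ := hw
  refine Set.mem_iUnion₂.2 ⟨fun i : Fin (N+1) => w i.1, mem_appSet_iff.2 ?_, ?_⟩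
  · intro w' hw'
    refine mem_appSet_iff.1 hv ?_
    refine mem_cyl_ofFn.2 fun i => ?_
    have h1 : w' i.1 = w i.1 := mem_cyl_ofFn.1 hw' ⟨i.1, Nat.lt_succ_of_lt i.2⟩
    have h2 : w i.1 = v i := mem_cyl_ofFn.1 hwv i
    rw [h1, h2]
  · exact mem_cyl_ofFn.2 fun i => rfl

lemma appU_mono (V : Set (Play Z)) : Monotone (appU V) :=
  monotone_nat_of_le_succ (appU_mono_succ V)

lemma iUnion_appU {V : Set (Play Z)} (hV : IsOpen V) : ⋃ N, appU V N = V := by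
  refine le_antisymm (Set.iUnion_subset fun N => appU_subset V N) ?_
  intro w hw
  obtain ⟨N, hN⟩ := exists_cyl_subset hV hw
  refine Set.mem_iUnion.2 ⟨N, Set.mem_iUnion₂.2 ⟨fun i : Fin N => w i.1,
    mem_appSet_iff.2 hN, mem_cyl_ofFn.2 fun i => rfl⟩⟩

lemma appSet_mono {V V' : Set (Play Z)} (h : V ⊆ V') (N : ℕ) :
    appSet V N ⊆ appSet V' N := by
  intro v hv
  exact mem_appSet_iff.2 (le_trans (mem_appSet_iff.1 hv) h)

end Approx
end BW

namespace BW
set_option linter.unusedSectionVars false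
open scoped NNReal ENNReal

section Compact
variable {X Y : Type} [Fintype X] [Fintype Y] [Nonempty X] [Nonempty Y]

abbrev Phi (X Y : Type) : Type := List (X × Y) → Y → (Set.Icc (0:ℝ≥0) 1)

instance : CompactSpace (Set.Icc (0:ℝ≥0) 1) :=
  isCompact_iff_compactSpace.1 isCompact_Icc

instance : CompactSpace (Phi X Y) := by infer_instance

def Kset (X Y : Type) [Fintype Y] : Set (Phi X Y) :=
  {f | ∀ p : List (X × Y), ∑ y : Y, (f p y : ℝ≥0) = 1}

lemma continuous_eval (p : List (X × Y)) (y : Y) :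
    Continuous (fun f : Phi X Y => (f p y : ℝ≥0)) :=
  continuous_subtype_val.comp ((continuous_apply y).comp (continuous_apply p))

lemma isClosed_Kset : IsClosed (Kset X Y) := by
  have : Kset X Y = ⋂ p : List (X × Y),
      (fun f : Phi X Y => ∑ y : Y, (f p y : ℝ≥0)) ⁻¹' {1} := by
    ext f; simp [Kset, Set.mem_iInter]
  rw [this]
  refine isClosed_iInter fun p => IsClosed.preimage ?_ isClosed_singleton
  exact continuous_finset_sum _ fun y _ => continuous_eval p y

noncomputable def toStrat (f : Phi X Y) (hf : f ∈ Kset X Y) : Strategy (X × Y) Y :=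
  fun p => ⟨fun y => ((f p y : ℝ≥0) : ℝ≥0∞), by
    have h : ∑ y : Y, ((f p y : ℝ≥0) : ℝ≥0∞) = 1 := by
      rw [← ENNReal.coe_finset_sum, hf p, ENNReal.coe_one]
    rw [← h]
    exact hasSum_fintype _⟩

lemma toStrat_apply (f : Phi X Y) (hf : f ∈ Kset X Y) (p : List (X × Y)) (y : Y) :
    toStrat f hf p y = ((f p y : ℝ≥0) : ℝ≥0∞) := rfl

noncomputable def ofStrat (τ : Strategy (X × Y) Y) : Phi X Y :=
  fun p y => ⟨(τ p y).toNNReal, ⟨zero_le, by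
    rw [← ENNReal.toNNReal_one]
    exact ENNReal.toNNReal_mono ENNReal.one_ne_top ((τ p).coe_le_one y)⟩⟩

lemma ofStrat_apply (τ : Strategy (X × Y) Y) (p : List (X × Y)) (y : Y) :
    ((ofStrat τ p y : ℝ≥0) : ℝ≥0∞) = τ p y := by
  simp [ofStrat, ENNReal.coe_toNNReal ((τ p).apply_ne_top y)]

lemma ofStrat_mem_Kset (τ : Strategy (X × Y) Y) : ofStrat τ ∈ Kset X Y := by
  intro p
  have h : ((∑ y : Y, (ofStrat τ p y : ℝ≥0) : ℝ≥0) : ℝ≥0∞) = 1 := by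
    rw [ENNReal.coe_finset_sum]
    simp only [ofStrat_apply]
    rw [← tsum_fintype (L := SummationFilter.unconditional _)]
    exact (τ p).tsum_coe
  exact_mod_cast h

noncomputable def cylProbF (σ : Strategy (X × Y) X) (f : Phi X Y)
    (p : List (X × Y)) : ℝ≥0 :=
  ∏ i : Fin p.length,
    (σ (p.take i.1) (p.get i).1).toNNReal * (f (p.take i.1) (p.get i).2 : ℝ≥0)

lemma coe_cylProbF (σ : Strategy (X × Y) X) (f : Phi X Y) (τ : Strategy (X × Y) Y)
    (hrel : ∀ p y, ((f p y : ℝ≥0) : ℝ≥0∞) = τ p y) (p : List (X × Y)) :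
    ((cylProbF σ f p : ℝ≥0) : ℝ≥0∞) = cylProb σ τ p := by
  rw [cylProbF, cylProb, ENNReal.coe_finset_prod]
  refine Finset.prod_congr rfl fun i _ => ?_
  rw [ENNReal.coe_mul, ENNReal.coe_toNNReal ((σ _).apply_ne_top _), hrel]

lemma continuous_sumCylProbF (σ : Strategy (X × Y) X) {N : ℕ}
    (S : Finset (Fin N → X × Y)) :
    Continuous (fun f : Phi X Y => ∑ v ∈ S, cylProbF σ f (List.ofFn v)) := by
  refine continuous_finset_sum _ fun v _ => ?_
  refine continuous_finset_prod _ fun i _ => ?_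
  exact (continuous_const.mul (continuous_eval _ _))

end Compact
end BW

namespace BW
set_option linter.unusedSectionVars false
open scoped NNReal ENNReal

section Main
variable {X Y : Type} [Fintype X] [Fintype Y] [Nonempty X] [Nonempty Y]
  [MeasurableSpace X] [MeasurableSpace Y]
  [TopologicalSpace X] [DiscreteTopology X]
  [TopologicalSpace Y] [DiscreteTopology Y]
  [DecidableEq X] [DecidableEq Y]

instance {Z M : Type} [Nonempty M] : Nonempty (Strategy Z M) :=
  ⟨fun _ => PMF.pure (Classical.arbitrary M)⟩

lemma measure_open_eq_iSup (σ : Strategy (X × Y) X) (τ : Strategy (X × Y) Y)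
    (μ : Measure (Play (X × Y))) (h1 : IsProbabilityMeasure μ)
    (h2 : ∀ p, μ (cyl p) = cylProb σ τ p) {V : Set (Play (X × Y))} (hV : IsOpen V) :
    μ V = ⨆ N, ∑ v ∈ appSet V N, cylProb σ τ (List.ofFn v) := by
  conv_lhs => rw [← iUnion_appU hV]
  rw [(appU_mono V).measure_iUnion]
  exact iSup_congr fun N => measure_biUnion_cyl σ τ μ h1 h2 _

lemma key (μ : Strategy (X × Y) X → Strategy (X × Y) Y → Measure (Play (X × Y)))
    (hμ : ∀ σ τ, IsProbabilityMeasure (μ σ τ) ∧ ∀ p, μ σ τ (cyl p) = cylProb σ τ p)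
    (U : ℕ → Set (Play (X × Y))) (hUo : ∀ n, IsOpen (U n)) (hUm : Monotone U)
    (σ : Strategy (X × Y) X) :
    (⨅ τ, μ σ τ (⋃ n, U n)) ≤ ⨆ n, ⨅ τ, μ σ τ (U n) := by
  set L := ⨆ n, ⨅ τ, μ σ τ (U n) with hLdef
  have hL1 : L ≤ 1 := by
    refine iSup_le fun n => ?_
    refine le_trans (iInf_le _ (Classical.arbitrary _)) ?_
    haveI := (hμ σ (Classical.arbitrary _)).1
    exact prob_le_one
  refine ENNReal.le_of_forall_pos_le_add fun ε hε hLt => ?_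
  set C : ℕ → Set (Phi X Y) := fun n =>
    Kset X Y ∩ {f | ∀ N : ℕ,
      ((∑ v ∈ appSet (U n) N, cylProbF σ f (List.ofFn v) : ℝ≥0) : ℝ≥0∞) ≤ L + ε}
    with hCdef
  have hclosed : ∀ n, IsClosed (C n) := by
    intro n
    refine isClosed_Kset.inter ?_
    have : {f : Phi X Y | ∀ N : ℕ,
        ((∑ v ∈ appSet (U n) N, cylProbF σ f (List.ofFn v) : ℝ≥0) : ℝ≥0∞) ≤ L + ε}
        = ⋂ N : ℕ, (fun f : Phi X Y =>
          ((∑ v ∈ appSet (U n) N, cylProbF σ f (List.ofFn v) : ℝ≥0) : ℝ≥0∞)) ⁻¹'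
            Set.Iic (L + ε) := by
      ext f; simp [Set.mem_iInter]
    rw [this]
    refine isClosed_iInter fun N => IsClosed.preimage ?_ isClosed_Iic
    exact ENNReal.continuous_coe.comp (continuous_sumCylProbF σ _)
  have hanti : Antitone C := by
    intro m n hmn f hf
    refine ⟨hf.1, fun N => ?_⟩
    refine le_trans ?_ (hf.2 N)
    refine ENNReal.coe_le_coe.2 ?_
    exact Finset.sum_le_sum_of_subset (appSet_mono (hUm hmn) N)
  have hne : ∀ n, (C n).Nonempty := by
    intro n
    have h1 : (⨅ τ, μ σ τ (U n)) ≤ L := le_iSup (fun n => ⨅ τ, μ σ τ (U n)) n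
    have h2 : (⨅ τ, μ σ τ (U n)) < L + ε := by
      refine lt_of_le_of_lt h1 (ENNReal.lt_add_right ?_ ?_)
      · exact (lt_of_le_of_lt hL1 ENNReal.one_lt_top).ne
      · exact_mod_cast hε.ne'
    obtain ⟨τ, hτ⟩ := iInf_lt_iff.1 h2
    refine ⟨ofStrat τ, ofStrat_mem_Kset τ, fun N => ?_⟩
    have hrel := ofStrat_apply τ
    have hsum : ((∑ v ∈ appSet (U n) N, cylProbF σ (ofStrat τ) (List.ofFn v) : ℝ≥0)
        : ℝ≥0∞) = μ σ τ (appU (U n) N) := by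
      rw [ENNReal.coe_finset_sum]
      simp only [appU]
      rw [measure_biUnion_cyl σ τ _ (hμ σ τ).1 (hμ σ τ).2]
      exact Finset.sum_congr rfl fun v _ => coe_cylProbF σ _ τ hrel _
    rw [hsum]
    exact le_trans (measure_mono (appU_subset _ _)) hτ.le
  obtain ⟨f, hf⟩ := IsCompact.nonempty_iInter_of_directed_nonempty_isCompact_isClosed
    C hanti.directed_ge hne (fun n => (hclosed n).isCompact) hclosed
  have hfK : f ∈ Kset X Y := (Set.mem_iInter.1 hf 0).1
  set τs := toStrat f hfK with hτs
  have hUn : ∀ n, μ σ τs (U n) ≤ L + ε := by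
    intro n
    rw [measure_open_eq_iSup σ τs _ (hμ σ τs).1 (hμ σ τs).2 (hUo n)]
    refine iSup_le fun N => ?_
    refine le_trans (le_of_eq ?_) ((Set.mem_iInter.1 hf n).2 N)
    rw [ENNReal.coe_finset_sum]
    exact Finset.sum_congr rfl fun v _ => (coe_cylProbF σ f τs (fun p y => rfl) _).symm
  have hfin : μ σ τs (⋃ n, U n) ≤ L + ε := by
    rw [hUm.measure_iUnion]
    exact iSup_le hUn
  exact le_trans (iInf_le _ τs) hfin

end Main
end BW

open scoped ENNReal NNReal in
open BW in
/-- The value of the Blackwell game on a countable union of open sets is the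
limit of the values on the finite subunions. -/
theorem stmt_16 {X Y : Type} [Fintype X] [Nonempty X] [Fintype Y] [Nonempty Y]
    [MeasurableSpace X] [MeasurableSpace Y]
    [TopologicalSpace X] [DiscreteTopology X]
    [TopologicalSpace Y] [DiscreteTopology Y]
    (μ : Strategy (X × Y) X → Strategy (X × Y) Y → Measure (Play (X × Y)))
    (hμ : ∀ σ τ, IsInduced σ τ (μ σ τ))
    (O : ℕ → Set (Play (X × Y))) (hO : ∀ i, IsOpen (O i)) :
    Tendsto
      (fun n => ⨆ σ, ⨅ τ, (μ σ τ (⋃ i ∈ Finset.range (n + 1), O i)).toReal)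
      atTop
      (nhds (⨆ σ, ⨅ τ, (μ σ τ (⋃ i, O i)).toReal)) := by
  classical
  set U : ℕ → Set (Play (X × Y)) := fun n => ⋃ i ∈ Finset.range (n + 1), O i with hUdef
  have hμ' : ∀ σ τ, IsProbabilityMeasure (μ σ τ) ∧
      ∀ p, μ σ τ (cyl p) = cylProb σ τ p := fun σ τ => ⟨(hμ σ τ).1, (hμ σ τ).2⟩
  have hUo : ∀ n, IsOpen (U n) := fun n => isOpen_biUnion fun i _ => hO i
  have hUm : Monotone U := by
    intro m n h
    exact Set.biUnion_subset_biUnion_left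
      (by exact_mod_cast Finset.range_subset_range.2 (by omega))
  have hUU : ⋃ n, U n = ⋃ i, O i := by
    ext w
    simp only [hUdef, Set.mem_iUnion, Finset.mem_range]
    constructor
    · rintro ⟨n, i, _, h⟩; exact ⟨i, h⟩
    · rintro ⟨i, h⟩; exact ⟨i, i, Nat.lt_succ_self i, h⟩
  set e : ℕ → ℝ≥0∞ := fun n => ⨆ σ, ⨅ τ, μ σ τ (U n) with hedef
  set E : ℝ≥0∞ := ⨆ σ, ⨅ τ, μ σ τ (⋃ i, O i) with hEdef
  have hmeas_ne : ∀ (σ) (τ) (s : Set (Play (X × Y))), μ σ τ s ≠ ⊤ := by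
    intro σ τ s
    haveI := (hμ σ τ).1
    exact measure_ne_top _ _
  have hinf_ne : ∀ (σ) (s : Set (Play (X × Y))), (⨅ τ, μ σ τ s) ≠ ⊤ := by
    intro σ s
    exact ne_top_of_le_ne_top (hmeas_ne σ (Classical.arbitrary _) s)
      (iInf_le _ (Classical.arbitrary _))
  have hE_ne : E ≠ ⊤ := by
    rw [hEdef]
    refine ne_top_of_le_ne_top (by norm_num : (1:ℝ≥0∞) ≠ ⊤) (iSup_le fun σ => ?_)
    refine le_trans (iInf_le _ (Classical.arbitrary _)) ?_
    haveI := (hμ σ (Classical.arbitrary _)).1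
    exact prob_le_one
  have hmono : Monotone e := by
    intro m n h
    exact iSup_mono fun σ => iInf_mono fun τ => measure_mono (hUm h)
  have hEq : E = ⨆ n, e n := by
    refine le_antisymm ?_ ?_
    · refine iSup_le fun σ => ?_
      have hk := key μ hμ' U hUo hUm σ
      rw [hUU] at hk
      refine le_trans hk ?_
      exact iSup_mono fun n => le_iSup (fun σ' => ⨅ τ, μ σ' τ (U n)) σ
    · refine iSup_le fun n => iSup_le fun σ => ?_
      refine le_trans ?_ (le_iSup _ σ)
      refine iInf_mono fun τ => measure_mono ?_
      rw [← hUU]; exact Set.subset_iUnion U n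
  have htendE : Tendsto e atTop (nhds E) := by
    rw [hEq]
    exact tendsto_atTop_iSup hmono
  have htend : Tendsto (fun n => (e n).toReal) atTop (nhds E.toReal) :=
    (ENNReal.tendsto_toReal hE_ne).comp htendE
  have hfun : ∀ n, (e n).toReal = ⨆ σ, ⨅ τ, (μ σ τ (U n)).toReal := by
    intro n
    rw [hedef]
    rw [ENNReal.toReal_iSup (fun σ => hinf_ne σ (U n))]
    exact iSup_congr fun σ => ENNReal.toReal_iInf (fun τ => hmeas_ne σ τ (U n))
  have hval : E.toReal = ⨆ σ, ⨅ τ, (μ σ τ (⋃ i, O i)).toReal := by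
    rw [hEdef]
    rw [ENNReal.toReal_iSup (fun σ => hinf_ne σ _)]
    exact iSup_congr fun σ => ENNReal.toReal_iInf (fun τ => hmeas_ne σ τ _)
  rw [← hval]
  refine htend.congr fun n => ?_
  rw [hfun n]
end
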